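/- arXiv:2504.19814 — 6 statements merged into one kernel-verified Lean document; each statement's English description precedes it below -/
import Mathlib

section
/- If a relation R on a set X is such that every R-cycle visiting the same 'process' (under a coloring c: X → P with |P| = n) more than twice can be shortened, then R is acyclic if and only if R has no cycle of length at most 2n. More precisely: suppose X is partitioned into n classes and R satisfies that whenever x₀ R x₁ R ... R x_r = x₀ is a cycle in which two distinct indices i < j have c(x_i) = c(x_j), there is a strictly shorter R-cycle. Then R has a cycle iff R has a cycle of length ≤ 2n. -/
/-!
A cycle of length `r > n` visits `r` positions but only `n` processes, so by pigeonhole some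
process repeats and the cycle can be shortened. A shortest cycle therefore has length at most `n`,
let alone `2n`.
-/

namespace HMSCPaper

theorem exists_lt_lt_apply_eq_of_card_lt {P : Type} [Fintype P] (f : ℕ → P) {r : ℕ}
    (h : Fintype.card P < r) : ∃ i j, i < j ∧ j < r ∧ f i = f j := by
  obtain ⟨a, b, hab, heq⟩ :=
    Fintype.exists_ne_map_eq_of_card_lt (fun i : Fin r => f i) (by simpa using h)
  rcases Fin.lt_or_lt_of_ne hab with hlt | hlt
  · exact ⟨a, b, hlt, b.isLt, heq⟩
  · exact ⟨b, a, hlt, a.isLt, heq.symm⟩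

theorem exists_le_of_forall_exists_lt {p : ℕ → Prop} {N : ℕ}
    (hdesc : ∀ r, p r → N < r → ∃ r' < r, p r') {r : ℕ} (hr : p r) : ∃ r' ≤ N, p r' := by
  classical
  refine ⟨Nat.find ⟨r, hr⟩, not_lt.mp fun hlt => ?_, Nat.find_spec ⟨r, hr⟩⟩
  obtain ⟨r', hr'lt, hr'⟩ := hdesc _ (Nat.find_spec ⟨r, hr⟩) hlt
  exact Nat.find_min _ hr'lt hr'

/-- If every `R`-cycle in which some color (process) repeats can be
strictly shortened, then `R` has a cycle iff it has a cycle of length at most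
`2n`, where `n` is the number of colors. Hence `R` is acyclic iff it has no
cycle of length ≤ 2n. -/
theorem acyclic_iff_no_short_cycle {X P : Type} [Fintype P] (n : ℕ)
    (hn : Fintype.card P = n) (c : X → P) (R : X → X → Prop)
    (hshort : ∀ (r : ℕ) (x : ℕ → X), 1 ≤ r → x 0 = x r →
      (∀ i < r, R (x i) (x (i + 1))) →
      (∃ i j, i < j ∧ j < r ∧ c (x i) = c (x j)) →
      ∃ (r' : ℕ) (y : ℕ → X), 1 ≤ r' ∧ r' < r ∧ y 0 = y r' ∧
        ∀ i < r', R (y i) (y (i + 1))) :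
    (∃ (r : ℕ) (x : ℕ → X), 1 ≤ r ∧ x 0 = x r ∧ ∀ i < r, R (x i) (x (i + 1))) ↔
    (∃ (r : ℕ) (x : ℕ → X), 1 ≤ r ∧ r ≤ 2 * n ∧ x 0 = x r ∧
      ∀ i < r, R (x i) (x (i + 1))) := by
  constructor
  · rintro ⟨r, hcycle⟩
    have hdesc : ∀ r, (∃ x : ℕ → X, 1 ≤ r ∧ x 0 = x r ∧ ∀ i < r, R (x i) (x (i + 1))) →
        n < r → ∃ r' < r, ∃ y : ℕ → X, 1 ≤ r' ∧ y 0 = y r' ∧ ∀ i < r', R (y i) (y (i + 1)) := by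
      rintro r ⟨x, hr, hclosed, hstep⟩ hlong
      obtain ⟨r', y, hr', hlt, hclosed', hstep'⟩ := hshort r x hr hclosed hstep
        (exists_lt_lt_apply_eq_of_card_lt (c ∘ x) (hn ▸ hlong))
      exact ⟨r', hlt, y, hr', hclosed', hstep'⟩
    obtain ⟨r', hle, y, hr', hclosed, hstep⟩ := exists_le_of_forall_exists_lt hdesc hcycle
    exact ⟨r', y, hr', by omega, hclosed, hstep⟩
  · rintro ⟨r, x, hr, -, hclosed, hstep⟩
    exact ⟨r, x, hr, hclosed, hstep⟩

end HMSCPaper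
end

section
/- Let ∼_proc and ∼_msg be symmetric relations on a set E of events colored by n processes, where ∼_proc is an equivalence relation relating only events of the same process. Define x ∼ y iff there is a path of length at most 2n−1 alternating or arbitrary steps of ∼_proc ∪ ∼_msg from x to y. Assume the saturation condition: whenever x ∼ y and x, y have the same process color, then x ∼_proc y. Then ∼ is transitive (hence an equivalence relation). -/
/-!
Walk along the concatenation of the two witnessing paths, maintaining an alternating path
(blocks of `sp` joined by single `sm` steps) from `x` to the current point whose blocks lie on
pairwise distinct processes. An `sp` step extends the last block; an `sm` step into an unused
process opens a new block. An `sm` step into the process of an earlier block yields a detour of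
length at most `2n - 1` from the end of that block, so by saturation the two points are
`sp`-related and all later blocks collapse into that one. At the end there are at most `n`
blocks, i.e. a path of length at most `2n - 1`, which reflexivity of `sp` pads to `2n - 1`.
-/

namespace HMSCPaper

/-- `Sim step n x y`: there is a path of length `2n - 1` (hence, by reflexivity
of the process relation, of length at most `2n - 1`) from `x` to `y` whose
steps are `step`. -/
def Sim {E : Type} (step : E → E → Prop) (n : ℕ) (x y : E) : Prop :=
  ∃ f : ℕ → E, f 0 = x ∧ f (2 * n - 1) = y ∧ ∀ i < 2 * n - 1, step (f i) (f (i + 1))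

section RelPow

variable {α : Type*} {r : α → α → Prop}

def RelPow (r : α → α → Prop) : ℕ → α → α → Prop
  | 0 => Eq
  | m + 1 => fun x z => ∃ y, r x y ∧ RelPow r m y z

theorem relPow_one {x y : α} (h : r x y) : RelPow r 1 x y :=
  ⟨y, h, rfl⟩

theorem relPow_self (hrefl : ∀ x, r x x) : ∀ (m : ℕ) (x : α), RelPow r m x x
  | 0, _ => rfl
  | m + 1, x => ⟨x, hrefl x, relPow_self hrefl m x⟩

theorem RelPow.trans {a b : ℕ} {x y z : α} (hxy : RelPow r a x y) (hyz : RelPow r b y z) :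
    RelPow r (a + b) x z := by
  induction a generalizing x with
  | zero => cases hxy; simpa using hyz
  | succ a ih =>
    obtain ⟨w, hxw, hwy⟩ := hxy
    rw [Nat.add_right_comm]
    exact ⟨w, hxw, ih hwy⟩

theorem RelPow.mono (hrefl : ∀ x, r x x) {a b : ℕ} (hab : a ≤ b) {x y : α}
    (h : RelPow r a x y) : RelPow r b x y := by
  obtain ⟨d, rfl⟩ := Nat.exists_eq_add_of_le' hab
  exact (relPow_self hrefl d x).trans h

theorem relPow_iff_exists_path {m : ℕ} {x y : α} :
    RelPow r m x y ↔
      ∃ f : ℕ → α, f 0 = x ∧ f m = y ∧ ∀ i < m, r (f i) (f (i + 1)) := by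
  induction m generalizing x with
  | zero =>
    refine ⟨fun h => ⟨fun _ => x, rfl, h, by simp⟩, ?_⟩
    rintro ⟨f, rfl, rfl, -⟩
    rfl
  | succ m ih =>
    constructor
    · rintro ⟨w, hxw, hwy⟩
      obtain ⟨f, rfl, rfl, hf⟩ := ih.1 hwy
      refine ⟨fun | 0 => x | i + 1 => f i, rfl, rfl, ?_⟩
      rintro (_ | i) hi
      exacts [hxw, hf i (by omega)]
    · rintro ⟨f, rfl, rfl, hf⟩
      exact ⟨f 1, hf 0 (by omega), ih.2 ⟨fun i => f (i + 1), rfl, rfl,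
        fun i hi => hf (i + 1) (by omega)⟩⟩

theorem sim_iff_relPow {E : Type} {r : E → E → Prop} {n : ℕ} {x y : E} :
    Sim r n x y ↔ RelPow r (2 * n - 1) x y :=
  relPow_iff_exists_path.symm

end RelPow

section AltPath

variable {E P : Type*} {sp sm : E → E → Prop} {c : E → P}

/-- The index lists the processes of the blocks, the last block first. -/
inductive AltPath (sp sm : E → E → Prop) (c : E → P) : List P → E → E → Prop
  | single {x z : E} : sp x z → AltPath sp sm c [c x] x z
  | cons {L : List P} {x y y' z : E} :
      AltPath sp sm c L x y → sm y y' → sp y' z → AltPath sp sm c (c y' :: L) x z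

variable {L : List P} {x y z : E}

theorem AltPath.length_pos (h : AltPath sp sm c L x y) : 0 < L.length := by
  cases h <;> simp

theorem AltPath.extend (htrans : ∀ {x y z}, sp x y → sp y z → sp x z)
    (h : AltPath sp sm c L x y) (hyz : sp y z) : AltPath sp sm c L x z := by
  cases h with
  | single hxy => exact .single (htrans hxy hyz)
  | cons h hsm hsp => exact .cons h hsm (htrans hsp hyz)

theorem AltPath.relPow (h : AltPath sp sm c L x y) :
    RelPow (sp ⊔ sm) (2 * L.length - 1) x y := by
  induction h with
  | single hxz => exact relPow_one (Or.inl hxz)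
  | cons h hsm hsp ih =>
    have := h.length_pos
    have h2 : RelPow (sp ⊔ sm) 2 _ _ := ⟨_, Or.inr hsm, relPow_one (Or.inl hsp)⟩
    convert ih.trans h2 using 2
    simp only [List.length_cons]
    omega

/-- The detour from the end of the block of process `c w` to `w` has length at most
`m + 2 * (L.length - 1)`, which `hm` keeps within `ℓ`. -/
theorem AltPath.shortcut (htrans : ∀ {x y z}, sp x y → sp y z → sp x z)
    (hproc : ∀ {x y}, sp x y → c x = c y) {ℓ : ℕ}
    (hsat : ∀ {m x y}, m ≤ ℓ → RelPow (sp ⊔ sm) m x y → c x = c y → sp x y)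
    (h : AltPath sp sm c L x y) {m : ℕ} {w : E} (hyw : RelPow (sp ⊔ sm) m y w)
    (hw : c w ∈ L) (hm : m + 2 * L.length ≤ ℓ + 2) :
    ∃ L', L' <:+ L ∧ AltPath sp sm c L' x w := by
  induction h generalizing m with
  | single hxy =>
    have hw : c w = c _ := List.mem_singleton.1 hw
    simp only [List.length_singleton] at hm
    exact ⟨_, List.suffix_refl _, .single (htrans hxy (hsat (by omega) hyw
      ((hproc hxy).symm.trans hw.symm)))⟩
  | cons h hsm hsp ih =>
    simp only [List.length_cons] at hm
    rcases List.mem_cons.1 hw with hw | hw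
    · exact ⟨_, List.suffix_refl _, .cons h hsm (htrans hsp (hsat (by omega) hyw
        ((hproc hsp).symm.trans hw.symm)))⟩
    · obtain ⟨L', hL', h'⟩ :=
        ih (m := m + 2) ⟨_, Or.inr hsm, _, Or.inl hsp, hyw⟩ hw (by omega)
      exact ⟨L', hL'.trans (List.suffix_cons _ _), h'⟩

theorem AltPath.exists_nodup_of_step [Fintype P] (hrefl : ∀ x, sp x x)
    (htrans : ∀ {x y z}, sp x y → sp y z → sp x z) (hproc : ∀ {x y}, sp x y → c x = c y)
    (hsat : ∀ {m x y}, m ≤ 2 * Fintype.card P - 1 → RelPow (sp ⊔ sm) m x y →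
      c x = c y → sp x y)
    (h : AltPath sp sm c L x y) (hL : L.Nodup) (hyz : (sp ⊔ sm) y z) :
    ∃ L', L'.Nodup ∧ AltPath sp sm c L' x z := by
  rcases hyz with hsp | hsm
  · exact ⟨L, hL, h.extend htrans hsp⟩
  by_cases hz : c z ∈ L
  · obtain ⟨L', hsuf, h'⟩ := h.shortcut @htrans @hproc @hsat (relPow_one (Or.inr hsm)) hz
      (by have := hL.length_le_card; omega)
    exact ⟨L', hL.sublist hsuf.sublist, h'⟩
  · exact ⟨c z :: L, List.nodup_cons.2 ⟨hz, hL⟩, .cons h hsm (hrefl z)⟩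

theorem AltPath.exists_nodup_of_relPow [Fintype P] (hrefl : ∀ x, sp x x)
    (htrans : ∀ {x y z}, sp x y → sp y z → sp x z) (hproc : ∀ {x y}, sp x y → c x = c y)
    (hsat : ∀ {m x y}, m ≤ 2 * Fintype.card P - 1 → RelPow (sp ⊔ sm) m x y →
      c x = c y → sp x y)
    (h : AltPath sp sm c L x y) (hL : L.Nodup) {m : ℕ} (hyz : RelPow (sp ⊔ sm) m y z) :
    ∃ L', L'.Nodup ∧ AltPath sp sm c L' x z := by
  induction m generalizing L y with
  | zero => cases hyz; exact ⟨L, hL, h⟩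
  | succ m ih =>
    obtain ⟨w, hyw, hwz⟩ := hyz
    obtain ⟨L', hL', h'⟩ := h.exists_nodup_of_step hrefl htrans hproc hsat hL hyw
    exact ih h' hL' hwz

end AltPath

theorem sim_transitive_general {E P : Type} [Fintype P] (n : ℕ) (hn : Fintype.card P = n)
    (c : E → P) (sp sm : E → E → Prop)
    (hsp_refl : ∀ x, sp x x)
    (hsp_trans : ∀ {x y z}, sp x y → sp y z → sp x z)
    (hsp_proc : ∀ {x y}, sp x y → c x = c y)
    (hsat : ∀ x y, Sim (fun a b => sp a b ∨ sm a b) n x y → c x = c y → sp x y) :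
    ∀ x y z, Sim (fun a b => sp a b ∨ sm a b) n x y →
      Sim (fun a b => sp a b ∨ sm a b) n y z →
      Sim (fun a b => sp a b ∨ sm a b) n x z := by
  subst hn
  have hrefl : ∀ x, (sp ⊔ sm) x x := fun x => Or.inl (hsp_refl x)
  have hsat_relPow {m x y} (hm : m ≤ 2 * Fintype.card P - 1) (hxy : RelPow (sp ⊔ sm) m x y) :
      c x = c y → sp x y :=
    hsat x y (sim_iff_relPow.2 (hxy.mono hrefl hm))
  intro x y z hxy hyz
  obtain ⟨L, hL, hxz⟩ :=
    (AltPath.single (sm := sm) (c := c) (hsp_refl x)).exists_nodup_of_relPow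
      hsp_refl hsp_trans hsp_proc hsat_relPow (List.nodup_singleton _)
      ((sim_iff_relPow.1 hxy).trans (sim_iff_relPow.1 hyz))
  have hP : 0 < Fintype.card P := Fintype.card_pos_iff.2 ⟨c x⟩
  exact sim_iff_relPow.2 (hxz.relPow.mono hrefl (by have := hL.length_le_card; omega))

/-- let `sp` (∼_proc) be an equivalence relation relating only
events of the same process, `sm` (∼_msg) a symmetric relation, and `∼` the
relation "joined by a path of length at most `2n − 1` in `sp ∪ sm`" where `n`
is the number of processes. If `∼` is saturated (x ∼ y on the same process
implies x ∼_proc y), then `∼` is transitive (hence an equivalence relation). -/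
theorem sim_transitive {E P : Type} [Fintype P] (n : ℕ) (hn : Fintype.card P = n)
    (hn1 : 1 ≤ n) (c : E → P) (sp sm : E → E → Prop)
    (hsp_refl : ∀ x, sp x x) (hsp_symm : ∀ {x y}, sp x y → sp y x)
    (hsp_trans : ∀ {x y z}, sp x y → sp y z → sp x z)
    (hsp_proc : ∀ {x y}, sp x y → c x = c y)
    (hsm_symm : ∀ {x y}, sm x y → sm y x)
    (hsat : ∀ x y, Sim (fun a b => sp a b ∨ sm a b) n x y → c x = c y → sp x y) :
    ∀ x y z, Sim (fun a b => sp a b ∨ sm a b) n x y →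
      Sim (fun a b => sp a b ∨ sm a b) n y z →
      Sim (fun a b => sp a b ∨ sm a b) n x z :=
  sim_transitive_general n hn c sp sm hsp_refl hsp_trans hsp_proc hsat

end HMSCPaper
end

section
/- If every element of a language L of finite cMSCs is connected (the undirected graph on events with edges given by ≤ ∪ ≤⁻¹ is connected), and M is a cMSC in the infinite product M₁ ∘ M₂ ∘ ⋯ with each Mᵢ ∈ L, then for any two events x, y of M belonging to the same factor Mᵢ, there is a path from x to y of length at most 2n−1 in the union of the relations ∼_proc (same process, same factor) and ∼_msg (matched message pair within the same factor), where n is the number of processes. -/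
/-! Core definitions: compositional message sequence charts (cMSCs),
concatenation, infinite products, completeness and connectedness. -/

namespace HMSCPaper

/-- Communication actions: `send p q` is `p!q`, `recv p q` is `p?q`
(process `p` receives from `q`). -/
inductive Act (P : Type) where
  | send : P → P → Act P
  | recv : P → P → Act P

/-- The process executing an action. -/
def Act.proc {P : Type} : Act P → P
  | .send p _ => p
  | .recv p _ => p

/-- A compositional MSC over processes `P` and messages `Msg`:
a partially ordered set of events labeled by actions, with a message-matching
relation `tri` (◁) satisfying FIFO per channel, the order being generated by
process successors and message edges, unmatched events carrying a message of `Msg`. -/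
structure CMSC (P Msg : Type) where
  E : Type
  le : E → E → Prop
  tri : E → E → Prop
  lab : E → Act P
  msg : E → Option Msg
  nonempty : Nonempty E
  le_refl : ∀ e, le e e
  le_trans : ∀ {a b c}, le a b → le b c → le a c
  le_antisymm : ∀ {a b}, le a b → le b a → a = b
  /-- events of the same process are totally ordered -/
  proc_total : ∀ e f, (lab e).proc = (lab f).proc → le e f ∨ le f e
  /-- every event has finitely many predecessors on its own process
  (per-process order type finite or ω) -/
  proc_wf : ∀ e, Finite {f : E // (lab f).proc = (lab e).proc ∧ le f e}
  tri_le : ∀ {e f}, tri e f → le e f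
  /-- matched pairs are send/receive pairs on a channel -/
  tri_lab : ∀ {e f}, tri e f → ∃ p q, lab e = Act.send p q ∧ lab f = Act.recv q p
  /-- FIFO policy per channel -/
  fifo : ∀ {e e' f f' p q}, tri e f → tri e' f' →
    lab e = Act.send p q → lab e' = Act.send p q → (le e e' ↔ le f f')
  /-- exactly the unmatched events carry a message label -/
  msg_dom : ∀ e, (msg e ≠ none) ↔ ((∀ f, ¬ tri e f) ∧ (∀ f, ¬ tri f e))
  /-- the partial order is the reflexive transitive closure of
  process successor and message edges -/
  le_gen : ∀ e f, le e f ↔ Relation.ReflTransGen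
    (fun a b => tri a b ∨ ((lab a).proc = (lab b).proc ∧ le a b ∧ a ≠ b ∧
      ∀ c, (lab c).proc = (lab a).proc → le a c → le c b → c = a ∨ c = b)) e f
  /-- unmatched events with the same action label as a matched pair occur after
  the matched send / before the matched receive -/
  unm_late : ∀ {e f} (g : E), tri e f →
    ((∀ h, ¬ tri g h) ∧ (∀ h, ¬ tri h g)) →
    ((lab g = lab e → le e g ∧ e ≠ g) ∧ (lab g = lab f → le g f ∧ g ≠ f))

/-- An event is unmatched if it is related to no event by ◁. -/
def CMSC.Unmatched {P Msg : Type} (M : CMSC P Msg) (e : M.E) : Prop :=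
  (∀ f, ¬ M.tri e f) ∧ (∀ f, ¬ M.tri f e)

/-- A (complete) MSC: no unmatched events. -/
def CMSC.Complete {P Msg : Type} (M : CMSC P Msg) : Prop :=
  ∀ e, ¬ M.Unmatched e

/-- A cMSC is connected if the undirected graph on events
with edges `≤ ∪ ≤⁻¹` is connected. -/
def CMSC.Connected {P Msg : Type} (M : CMSC P Msg) : Prop :=
  ∀ x y : M.E, Relation.ReflTransGen (fun a b => M.le a b ∨ M.le b a) x y

/-- Witness that `M` belongs to the concatenation `M₁ ∘ M₂`: `M` is the vertical
stacking of `M₁` above `M₂`, with per-process order `E¹_p × E²_p` added, and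
possibly new message edges matching unmatched sends of `M₁` with unmatched
receives of `M₂` carrying the same message. -/
structure IsConcat {P Msg : Type} (M₁ M₂ M : CMSC P Msg) where
  eqv : M.E ≃ (M₁.E ⊕ M₂.E)
  lab_eq : ∀ e, M.lab e = Sum.elim M₁.lab M₂.lab (eqv e)
  le_left : ∀ a b : M₁.E, (M₁.lab a).proc = (M₁.lab b).proc →
    (M.le (eqv.symm (.inl a)) (eqv.symm (.inl b)) ↔ M₁.le a b)
  le_right : ∀ a b : M₂.E, (M₂.lab a).proc = (M₂.lab b).proc →
    (M.le (eqv.symm (.inr a)) (eqv.symm (.inr b)) ↔ M₂.le a b)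
  le_cross : ∀ (a : M₁.E) (b : M₂.E), (M₁.lab a).proc = (M₂.lab b).proc →
    M.le (eqv.symm (.inl a)) (eqv.symm (.inr b))
  tri_left : ∀ a b : M₁.E,
    (M.tri (eqv.symm (.inl a)) (eqv.symm (.inl b)) ↔ M₁.tri a b)
  tri_right : ∀ a b : M₂.E,
    (M.tri (eqv.symm (.inr a)) (eqv.symm (.inr b)) ↔ M₂.tri a b)
  tri_cross : ∀ (a : M₁.E) (b : M₂.E),
    M.tri (eqv.symm (.inl a)) (eqv.symm (.inr b)) →
    M₁.msg a = M₂.msg b ∧ M₁.msg a ≠ none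
  tri_back : ∀ (a : M₂.E) (b : M₁.E), ¬ M.tri (eqv.symm (.inr a)) (eqv.symm (.inl b))
  msg_eq : ∀ e, M.Unmatched e → M.msg e = Sum.elim M₁.msg M₂.msg (eqv e)

/-- `M ∈ M₁ ∘ M₂`. -/
def ConcatMem {P Msg : Type} (M₁ M₂ M : CMSC P Msg) : Prop :=
  Nonempty (IsConcat M₁ M₂ M)

/-- `M` is a composition of the nonempty list `l` of cMSCs (left to right). -/
def ConcatChain {P Msg : Type} : List (CMSC P Msg) → CMSC P Msg → Prop
  | [], _ => False
  | [N], M => M = N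
  | N :: N' :: l, M => ∃ M', ConcatChain (N' :: l) M' ∧ ConcatMem N M' M

end HMSCPaper

namespace HMSCPaper

/-- Witness that `M` belongs to the infinite product `∏_{i≥0} Ms i`. -/
structure IsProduct {P Msg : Type} (Ms : ℕ → CMSC P Msg) (M : CMSC P Msg) where
  eqv : M.E ≃ (Σ i : ℕ, (Ms i).E)
  lab_eq : ∀ e : M.E, M.lab e = (Ms (eqv e).1).lab (eqv e).2
  le_same : ∀ (i : ℕ) (a b : (Ms i).E), ((Ms i).lab a).proc = ((Ms i).lab b).proc →
    (M.le (eqv.symm ⟨i, a⟩) (eqv.symm ⟨i, b⟩) ↔ (Ms i).le a b)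
  le_lt : ∀ (i j : ℕ) (a : (Ms i).E) (b : (Ms j).E), i < j →
    ((Ms i).lab a).proc = ((Ms j).lab b).proc →
    M.le (eqv.symm ⟨i, a⟩) (eqv.symm ⟨j, b⟩)
  le_gt : ∀ (i j : ℕ) (a : (Ms i).E) (b : (Ms j).E), j < i →
    ((Ms i).lab a).proc = ((Ms j).lab b).proc →
    ¬ M.le (eqv.symm ⟨i, a⟩) (eqv.symm ⟨j, b⟩)
  tri_same : ∀ (i : ℕ) (a b : (Ms i).E),
    (M.tri (eqv.symm ⟨i, a⟩) (eqv.symm ⟨i, b⟩) ↔ (Ms i).tri a b)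
  tri_cross : ∀ (i j : ℕ) (a : (Ms i).E) (b : (Ms j).E), i ≠ j →
    M.tri (eqv.symm ⟨i, a⟩) (eqv.symm ⟨j, b⟩) →
    i < j ∧ (Ms i).msg a = (Ms j).msg b ∧ (Ms i).msg a ≠ none
  msg_eq : ∀ (i : ℕ) (a : (Ms i).E), M.Unmatched (eqv.symm ⟨i, a⟩) →
    M.msg (eqv.symm ⟨i, a⟩) = (Ms i).msg a

end HMSCPaper

namespace HMSCPaper

/-- Auxiliary: symmetric step relation inside one cMSC. -/
def procRel {P Msg : Type} (N : CMSC P Msg) (x y : N.E) : Prop :=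
  (N.lab x).proc = (N.lab y).proc ∨ N.tri x y ∨ N.tri y x

lemma procRel_symm {P Msg : Type} (N : CMSC P Msg) : Symmetric (procRel N) := by
  intro x y hxy
  rcases hxy with h | h | h
  · exact Or.inl h.symm
  · exact Or.inr (Or.inr h)
  · exact Or.inr (Or.inl h)

lemma le_to_procRel {P Msg : Type} (N : CMSC P Msg) {x y : N.E} (hle : N.le x y) :
    Relation.ReflTransGen (procRel N) x y := by
  have := (N.le_gen x y).mp hle
  refine Relation.ReflTransGen.mono (p := procRel N) ?_ x y this
  intro a b hab
  rcases hab with h | h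
  · exact Or.inr (Or.inl h)
  · exact Or.inl h.1

lemma conn_to_procRel {P Msg : Type} (N : CMSC P Msg) (hC : N.Connected) (x y : N.E) :
    Relation.ReflTransGen (procRel N) x y := by
  have h := hC x y
  induction h with
  | refl => exact Relation.ReflTransGen.refl
  | tail _ step ih =>
    rcases step with h | h
    · exact ih.trans (le_to_procRel N h)
    · exact ih.trans (haveI : Std.Symm (procRel N) := ⟨procRel_symm N⟩; Std.Symm.symm _ _ (le_to_procRel N h))

/-- Auxiliary: process graph of a cMSC. -/
def procGraph {P Msg : Type} (N : CMSC P Msg) : SimpleGraph P where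
  Adj p q := p ≠ q ∧ ((∃ e f, N.tri e f ∧ (N.lab e).proc = p ∧ (N.lab f).proc = q) ∨
                      (∃ e f, N.tri e f ∧ (N.lab e).proc = q ∧ (N.lab f).proc = p))
  symm := ⟨fun p q h => ⟨h.1.symm, h.2.symm⟩⟩
  loopless := ⟨fun p h => h.1 rfl⟩

lemma procRel_reach {P Msg : Type} (N : CMSC P Msg) {x y : N.E}
    (h : Relation.ReflTransGen (procRel N) x y) :
    (procGraph N).Reachable (N.lab x).proc (N.lab y).proc := by
  induction h with
  | refl => exact SimpleGraph.Reachable.refl _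
  | @tail b c _ step ih =>
    rcases step with h | h | h
    · rw [← h]; exact ih
    · by_cases hpq : (N.lab b).proc = (N.lab c).proc
      · rw [← hpq]; exact ih
      · exact ih.trans (SimpleGraph.Adj.reachable ⟨hpq, Or.inl ⟨b, c, h, rfl, rfl⟩⟩)
    · by_cases hpq : (N.lab b).proc = (N.lab c).proc
      · rw [← hpq]; exact ih
      · exact ih.trans (SimpleGraph.Adj.reachable ⟨hpq, Or.inr ⟨c, b, h, rfl, rfl⟩⟩)

lemma walk_to_evpath {P Msg : Type} (N : CMSC P Msg) :
    ∀ {p q : P} (w : (procGraph N).Walk p q) (x y : N.E),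
    (N.lab x).proc = p → (N.lab y).proc = q →
    ∃ f : ℕ → N.E, f 0 = x ∧ f (2 * w.length + 1) = y ∧
      ∀ k ≤ 2 * w.length, procRel N (f k) (f (k + 1)) := by
  intro p q w
  induction w with
  | nil =>
    intro x y hx hy
    refine ⟨fun k => if k = 0 then x else y, by simp, by simp, ?_⟩
    intro k hk
    simp only [SimpleGraph.Walk.length_nil] at hk
    have hk0 : k = 0 := by omega
    subst hk0
    simp only [if_pos rfl, if_neg (by omega : (1 : ℕ) ≠ 0)]
    exact Or.inl (hx.trans hy.symm)
  | @cons p p' q hadj w ih =>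
    intro x y hx hy
    obtain ⟨hne, hor⟩ := hadj
    obtain ⟨e, e', htri, he, he'⟩ : ∃ e e', procRel N e e' ∧
        (N.lab e).proc = p ∧ (N.lab e').proc = p' := by
      rcases hor with ⟨e, f, ht, h1, h2⟩ | ⟨e, f, ht, h1, h2⟩
      · exact ⟨e, f, Or.inr (Or.inl ht), h1, h2⟩
      · exact ⟨f, e, Or.inr (Or.inr ht), h2, h1⟩
    obtain ⟨g, hg0, hgend, hgstep⟩ := ih e' y he' hy
    refine ⟨fun k => match k with | 0 => x | 1 => e | (n + 2) => g n, rfl, ?_, ?_⟩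
    · show (fun k => match k with | 0 => x | 1 => e | (n + 2) => g n)
        (2 * (w.length + 1) + 1) = y
      have : 2 * (w.length + 1) + 1 = (2 * w.length + 1) + 2 := by omega
      rw [this]
      exact hgend
    · intro k hk
      match k with
      | 0 => exact Or.inl (hx.trans he.symm)
      | 1 => simpa [hg0] using htri
      | (n + 2) =>
        have hn : n ≤ 2 * w.length := by
          change n + 2 ≤ 2 * (w.length + 1) at hk; omega
        exact hgstep n hn


/-- if all cMSCs of `L` are finite and connected and
`M ∈ ∏_{i} Ms i` with all `Ms i ∈ L`, then any two events of `M` lying in the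
same factor are joined by a path of length at most `2n − 1` (realized as a
path with exactly `2n − 1` possibly-stuttering steps) whose steps are
`∼_proc` (same process, same factor) or `∼_msg` (matched message pair within
the same factor), where `n = |P|`. -/

theorem same_factor_short_path {P Msg : Type} [Fintype P] (L : Set (CMSC P Msg))
    (hfin : ∀ M ∈ L, Finite M.E) (hconn : ∀ M ∈ L, M.Connected)
    (Ms : ℕ → CMSC P Msg) (hMs : ∀ i, Ms i ∈ L)
    (M : CMSC P Msg) (h : IsProduct Ms M) (i : ℕ) (a b : (Ms i).E) :
    ∃ f : ℕ → M.E, f 0 = h.eqv.symm ⟨i, a⟩ ∧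
      f (2 * Fintype.card P - 1) = h.eqv.symm ⟨i, b⟩ ∧
      ∀ k < 2 * Fintype.card P - 1,
        (h.eqv (f k)).1 = (h.eqv (f (k + 1))).1 ∧
        ((M.lab (f k)).proc = (M.lab (f (k + 1))).proc ∨
          M.tri (f k) (f (k + 1)) ∨ M.tri (f (k + 1)) (f k)) := by
  classical
  have hC : (Ms i).Connected := hconn (Ms i) (hMs i)
  obtain ⟨e0⟩ := (Ms i).nonempty
  have hn : 1 ≤ Fintype.card P := Fintype.card_pos_iff.mpr ⟨((Ms i).lab e0).proc⟩
  have hrtg : Relation.ReflTransGen (procRel (Ms i)) a b := conn_to_procRel (Ms i) hC a b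
  obtain ⟨w⟩ := procRel_reach (Ms i) hrtg
  have hlen : w.toPath.1.length < Fintype.card P := w.toPath.2.length_lt
  obtain ⟨g, hg0, hgend, hgstep⟩ := walk_to_evpath (Ms i) w.toPath.1 a b rfl rfl
  set m := 2 * w.toPath.1.length + 1 with hm
  have hmle : m ≤ 2 * Fintype.card P - 1 := by omega
  have labE : ∀ x : (Ms i).E, M.lab (h.eqv.symm ⟨i, x⟩) = (Ms i).lab x := by
    intro x
    rw [h.lab_eq, Equiv.apply_symm_apply]
  refine ⟨fun k => h.eqv.symm ⟨i, g (if k ≤ m then k else m)⟩, ?_, ?_, ?_⟩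
  · show h.eqv.symm ⟨i, g (if 0 ≤ m then 0 else m)⟩ = h.eqv.symm ⟨i, a⟩
    rw [if_pos (Nat.zero_le m), hg0]
  · by_cases hx : 2 * Fintype.card P - 1 ≤ m
    · have heq : m = 2 * Fintype.card P - 1 := le_antisymm hmle hx
      rw [← heq]
      simp [hgend]
    · simp only [if_neg hx, hgend]
  · intro k hk
    refine ⟨?_, ?_⟩
    · simp only [Equiv.apply_symm_apply]
    by_cases hkm : k < m
    · have h1 : (if k ≤ m then k else m) = k := if_pos (by omega)
      have h2 : (if k + 1 ≤ m then k + 1 else m) = k + 1 := if_pos (by omega)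
      simp only [h1, h2]
      have hstep := hgstep k (by omega)
      rcases hstep with hp | ht | ht
      · exact Or.inl (by rw [labE, labE]; exact hp)
      · exact Or.inr (Or.inl ((h.tri_same i _ _).mpr ht))
      · exact Or.inr (Or.inr ((h.tri_same i _ _).mpr ht))
    · have h1 : (if k ≤ m then k else m) = m := by split <;> omega
      have h2 : (if k + 1 ≤ m then k + 1 else m) = m := by split <;> omega
      refine Or.inl ?_
      simp only [h1, h2]

end HMSCPaper
end

section
/- In a connected cMSC with events on at most n processes, any two events x and y are connected by a path x = x₁, x₂, ..., x_{2n} = y (with repetitions allowed) such that each consecutive pair is either on the same process and comparable under ≤_p, or related by a message edge ◁ ∪ ◁⁻¹. -/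
namespace HMSCPaper

inductive Alt (M : CMSC P Msg) : List P → M.E → M.E → Prop
  | base {x y} : (M.lab x).proc = (M.lab y).proc →
      Alt M [(M.lab x).proc] x y
  | step {x a b y L} : (M.lab x).proc = (M.lab a).proc →
      (M.tri a b ∨ M.tri b a) → Alt M L b y →
      Alt M ((M.lab x).proc :: L) x y

namespace Alt

variable {M : CMSC P Msg}

theorem length_pos {L x y} (h : Alt M L x y) : 0 < L.length := by
  cases h <;> simp

theorem head_eq {p L x y} (h : Alt M (p :: L) x y) : p = (M.lab x).proc := by
  cases h <;> rfl

theorem replace_head {p L x x' y} (h : Alt M (p :: L) x' y)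
    (hp : (M.lab x).proc = (M.lab x').proc) :
    Alt M ((M.lab x).proc :: L) x y := by
  cases h with
  | base h' => exact Alt.base (hp.trans h')
  | step h1 h2 h3 => exact Alt.step (hp.trans h1) h2 h3

theorem prepend {L x x' y} (hp : (M.lab x).proc = (M.lab x').proc)
    (h : Alt M L x' y) : ∃ L', Alt M L' x y := by
  obtain ⟨p, L₀, rfl⟩ : ∃ p L₀, L = p :: L₀ := by
    cases h <;> exact ⟨_, _, rfl⟩
  exact ⟨_, replace_head h hp⟩

theorem mem_suffix {L z y} (h : Alt M L z y) {p : P} (hp : p ∈ L) :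
    ∃ w L₂, Alt M (p :: L₂) w y ∧ (p :: L₂) <:+ L := by
  induction h with
  | base h' =>
    simp only [List.mem_singleton] at hp
    subst hp
    exact ⟨_, [], Alt.base h', List.suffix_refl _⟩
  | step h1 h2 h3 ih =>
    rcases List.mem_cons.1 hp with rfl | hp'
    · exact ⟨_, _, Alt.step h1 h2 h3, List.suffix_refl _⟩
    · obtain ⟨w, L₂, hw, hsuf⟩ := ih hp'
      exact ⟨w, L₂, hw, hsuf.trans (List.suffix_cons _ _)⟩

theorem nodup {L x y} (h : Alt M L x y) :
    ∃ L', L'.Nodup ∧ Alt M L' x y := by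
  induction h with
  | base h' => exact ⟨_, List.nodup_singleton _, Alt.base h'⟩
  | @step x a b y L h1 h2 h3 ih =>
    obtain ⟨L', hnd, hL'⟩ := ih
    by_cases hmem : (M.lab x).proc ∈ L'
    · obtain ⟨w, L₂, hw, hsuf⟩ := hL'.mem_suffix hmem
      have hpw : (M.lab x).proc = (M.lab w).proc := hw.head_eq
      exact ⟨_, hnd.sublist hsuf.sublist, hw.replace_head hpw⟩
    · exact ⟨_, hnd.cons hmem, Alt.step h1 h2 hL'⟩

end Alt

/-- The step relation of the theorem statement. -/
def CMSC.Step (M : CMSC P Msg) (a b : M.E) : Prop :=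
  ((M.lab a).proc = (M.lab b).proc ∧ (M.le a b ∨ M.le b a)) ∨
    M.tri a b ∨ M.tri b a

theorem CMSC.Step.refl (M : CMSC P Msg) (a : M.E) : M.Step a a :=
  Or.inl ⟨rfl, Or.inl (M.le_refl a)⟩

theorem CMSC.step_of_proc (M : CMSC P Msg) {a b : M.E}
    (h : (M.lab a).proc = (M.lab b).proc) : M.Step a b :=
  Or.inl ⟨h, M.proc_total a b h⟩

/-- Any connectivity path yields an alternating path. -/
theorem exists_alt (M : CMSC P Msg) {x y : M.E}
    (h : Relation.ReflTransGen M.Step x y) : ∃ L, Alt M L x y := by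
  induction h using Relation.ReflTransGen.head_induction_on with
  | refl => exact ⟨_, Alt.base rfl⟩
  | head hstep _ ih =>
    obtain ⟨L, hL⟩ := ih
    rcases hstep with ⟨hp, _⟩ | ht | ht
    · exact hL.prepend hp
    · exact ⟨_, Alt.step rfl (Or.inl ht) hL⟩
    · exact ⟨_, Alt.step rfl (Or.inr ht) hL⟩

theorem CMSC.step_symm (M : CMSC P Msg) : Symmetric M.Step := by
  intro a b h
  rcases h with ⟨hp, hl⟩ | ht | ht
  · exact Or.inl ⟨hp.symm, hl.symm⟩
  · exact Or.inr (Or.inr ht)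
  · exact Or.inr (Or.inl ht)

theorem steps_of_le (M : CMSC P Msg) {a b : M.E} (h : M.le a b) :
    Relation.ReflTransGen M.Step a b := by
  rw [M.le_gen] at h
  induction h with
  | refl => exact .refl
  | tail _ hs ih =>
    refine ih.tail ?_
    rcases hs with ht | ⟨hp, hab, _⟩
    · exact Or.inr (Or.inl ht)
    · exact Or.inl ⟨hp, Or.inl hab⟩

theorem step_of_conn (M : CMSC P Msg) {x y : M.E}
    (h : Relation.ReflTransGen (fun a b => M.le a b ∨ M.le b a) x y) :
    Relation.ReflTransGen M.Step x y := by
  induction h with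
  | refl => exact .refl
  | tail _ hstep ih =>
    refine ih.trans ?_
    rcases hstep with hle | hle
    · exact steps_of_le M hle
    · exact (@Relation.ReflTransGen.symmetric _ _ ⟨M.step_symm⟩).symm _ _ (steps_of_le M hle)

/-- Unroll an alternating path into an eventually constant function. -/
theorem Alt.toFun {L} {x y : M.E} (h : Alt M L x y) :
    ∃ f : ℕ → M.E, f 0 = x ∧ (∀ k, 2 * L.length - 1 ≤ k → f k = y) ∧
      ∀ k, M.Step (f k) (f (k + 1)) := by
  induction h with
  | @base x y h' =>
    refine ⟨fun k => if k = 0 then x else y, by simp, ?_, ?_⟩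
    · intro k hk
      simp only [List.length_singleton] at hk
      show (if k = 0 then x else y) = y
      rw [if_neg (by omega : ¬ k = 0)]
    · intro k
      rcases Nat.eq_zero_or_pos k with rfl | hk
      · simpa using M.step_of_proc h'
      · simp only [if_neg (by omega : ¬ k = 0), if_neg (by omega : ¬ k + 1 = 0)]
        exact CMSC.Step.refl M y
  | @step x a b y L h1 h2 h3 ih =>
    obtain ⟨f, hf0, hfy, hfs⟩ := ih
    refine ⟨fun k => match k with | 0 => x | 1 => a | (k + 2) => f k, rfl, ?_, ?_⟩
    · intro k hk
      have hlp := h3.length_pos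
      obtain ⟨k', rfl⟩ : ∃ k', k = k' + 2 := ⟨k - 2, by simp at hk; omega⟩
      exact hfy k' (by simp at hk ⊢; omega)
    · intro k
      match k with
      | 0 => exact M.step_of_proc h1
      | 1 =>
        show M.Step a (f 0)
        rw [hf0]
        rcases h2 with ht | ht
        · exact Or.inr (Or.inl ht)
        · exact Or.inr (Or.inr ht)
      | (k + 2) => exact hfs k


/-- in a connected cMSC over at most `n = |P|` processes, any two
events `x`, `y` are joined by a path `x = x₁, …, x_{2n} = y` (repetitions
allowed) whose consecutive steps are either on the same process and comparable
under the process order, or related by a message edge `◁ ∪ ◁⁻¹`. -/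
theorem connected_short_path {P Msg : Type} [Fintype P] (M : CMSC P Msg)
    (hconn : M.Connected) (x y : M.E) :
    ∃ f : ℕ → M.E, f 0 = x ∧ f (2 * Fintype.card P - 1) = y ∧
      ∀ k < 2 * Fintype.card P - 1,
        ((M.lab (f k)).proc = (M.lab (f (k + 1))).proc ∧
          (M.le (f k) (f (k + 1)) ∨ M.le (f (k + 1)) (f k))) ∨
        M.tri (f k) (f (k + 1)) ∨ M.tri (f (k + 1)) (f k) := by
  have hne : Nonempty P := ⟨(M.lab (Classical.choice M.nonempty)).proc⟩
  have hcard : 1 ≤ Fintype.card P := Fintype.card_pos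
  obtain ⟨L, hL⟩ := exists_alt M (step_of_conn M (hconn x y))
  obtain ⟨L', hnd, hL'⟩ := hL.nodup
  have hlen : L'.length ≤ Fintype.card P := hnd.length_le_card
  obtain ⟨f, hf0, hfy, hfs⟩ := hL'.toFun
  exact ⟨f, hf0, hfy _ (by omega), fun k _ => hfs k⟩

end HMSCPaper
end

section
/- In the two-counter-machine simulation by an HMSC, for any path ρ of the HMSC whose composition contains a complete MSC, and any prefix of ρ ending just before a zero-test transition on channel (p₁,p₁'), the number of p₁!p₁'-events equals the number of p₁'?p₁-events in that prefix. Equivalently: a complete-message cMSC from p₁ to p₁' can extend a composition towards a complete MSC only if the pending channel content of (p₁,p₁') is empty. -/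
namespace HMSCPaper


/-! ### Auxiliary machinery -/

section Aux

variable {P Msg : Type}

/-- The match of a message is unique (right argument). -/
theorem tri_unique_right (M : CMSC P Msg) {e f f' : M.E}
    (h : M.tri e f) (h' : M.tri e f') : f = f' := by
  obtain ⟨p, q, he, -⟩ := M.tri_lab h
  exact M.le_antisymm ((M.fifo h h' he he).mp (M.le_refl e))
    ((M.fifo h' h he he).mp (M.le_refl e))

/-- The match of a message is unique (left argument). -/
theorem tri_unique_left (M : CMSC P Msg) {e e' f : M.E}
    (h : M.tri e f) (h' : M.tri e' f) : e = e' := by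
  obtain ⟨p, q, he, hf⟩ := M.tri_lab h
  obtain ⟨p', q', he', hf'⟩ := M.tri_lab h'
  rw [hf] at hf'
  obtain ⟨hq, hp⟩ : q = q' ∧ p = p' := by
    constructor <;> injection hf'
  subst hq; subst hp
  exact M.le_antisymm ((M.fifo h h' he he').mpr (M.le_refl f))
    ((M.fifo h' h he' he).mpr (M.le_refl f))

/-- The disjoint sum of the event sets of a list of cMSCs. -/
def ES : List (CMSC P Msg) → Type
  | [] => Empty
  | N :: l => N.E ⊕ ES l

def ESlab : (l : List (CMSC P Msg)) → ES l → Act P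
  | [], x => x.elim
  | N :: _, .inl a => N.lab a
  | _ :: l, .inr b => ESlab l b

def ESidx : (l : List (CMSC P Msg)) → ES l → ℕ
  | [], x => x.elim
  | _ :: _, .inl _ => 0
  | _ :: l, .inr b => ESidx l b + 1

def EStri : (l : List (CMSC P Msg)) → ES l → ES l → Prop
  | [], x, _ => x.elim
  | N :: _, .inl a, .inl b => N.tri a b
  | _ :: l, .inr a, .inr b => EStri l a b
  | _ :: _, _, _ => False

theorem EStri_idx : ∀ (l : List (CMSC P Msg)) (x y : ES l),
    EStri l x y → ESidx l x = ESidx l y := by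
  intro l
  induction l with
  | nil => intro x; exact x.elim
  | cons N l ih =>
    rintro (a | a) (b | b) h
    · rfl
    · exact absurd h (by simp [EStri])
    · exact absurd h (by simp [EStri])
    · simp only [ESidx]
      exact congrArg (· + 1) (ih a b h)

/-- Embedding of the events of the suffix into the events of an appended list. -/
def emb2 : (l₁ l₂ : List (CMSC P Msg)) → ES l₂ → ES (l₁ ++ l₂)
  | [], _, x => x
  | _ :: l₁, l₂, x => Sum.inr (emb2 l₁ l₂ x)

theorem emb2_lab : ∀ (l₁ l₂ : List (CMSC P Msg)) (x : ES l₂),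
    ESlab (l₁ ++ l₂) (emb2 l₁ l₂ x) = ESlab l₂ x := by
  intro l₁
  induction l₁ with
  | nil => intro l₂ x; rfl
  | cons N l₁ ih => intro l₂ x; exact ih l₂ x

theorem emb2_idx : ∀ (l₁ l₂ : List (CMSC P Msg)) (x : ES l₂),
    ESidx (l₁ ++ l₂) (emb2 l₁ l₂ x) = l₁.length + ESidx l₂ x := by
  intro l₁
  induction l₁ with
  | nil => intro l₂ x; simp [emb2]
  | cons N l₁ ih =>
    intro l₂ x
    show ESidx (l₁ ++ l₂) (emb2 l₁ l₂ x) + 1 = l₁.length + 1 + ESidx l₂ x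
    rw [ih l₂ x]; omega

theorem emb2_tri : ∀ (l₁ l₂ : List (CMSC P Msg)) (x y : ES l₂),
    EStri l₂ x y → EStri (l₁ ++ l₂) (emb2 l₁ l₂ x) (emb2 l₁ l₂ y) := by
  intro l₁
  induction l₁ with
  | nil => intro l₂ x y h; exact h
  | cons N l₁ ih => intro l₂ x y h; exact ih l₂ x y h

theorem idx_eq_imp : ∀ (l₁ : List (CMSC P Msg)) (N₂ : CMSC P Msg)
    (l₂ : List (CMSC P Msg)) (y : ES (l₁ ++ N₂ :: l₂)),
    ESidx (l₁ ++ N₂ :: l₂) y = l₁.length →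
    ∃ z : N₂.E, y = emb2 l₁ (N₂ :: l₂) (Sum.inl z) := by
  intro l₁
  induction l₁ with
  | nil =>
    rintro N₂ l₂ (z | b) h
    · exact ⟨z, rfl⟩
    · exact absurd h (by simp [ESidx])
  | cons N l₁ ih =>
    rintro N₂ l₂ (a | b) h
    · exact absurd h (by simp [ESidx])
    · have h' : ESidx (l₁ ++ N₂ :: l₂) b = l₁.length := by
        have : ESidx (l₁ ++ N₂ :: l₂) b + 1 = l₁.length + 1 := h
        omega
      obtain ⟨z, hz⟩ := ih N₂ l₂ b h'
      exact ⟨z, by rw [hz]; rfl⟩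

/-- Splitting the labelled events of `N :: l₁ ++ l₂` with index below the prefix. -/
def prefixEquiv (N : CMSC P Msg) (l₁ l₂ : List (CMSC P Msg)) (a : Act P) :
    {x : ES ((N :: l₁) ++ l₂) //
      ESidx ((N :: l₁) ++ l₂) x < (N :: l₁).length ∧ ESlab ((N :: l₁) ++ l₂) x = a} ≃
    ({e : N.E // N.lab e = a} ⊕
      {x : ES (l₁ ++ l₂) // ESidx (l₁ ++ l₂) x < l₁.length ∧ ESlab (l₁ ++ l₂) x = a}) where
  toFun := fun z => match z with
    | ⟨.inl e, h⟩ => .inl ⟨e, h.2⟩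
    | ⟨.inr b, h⟩ => .inr ⟨b, Nat.lt_of_succ_lt_succ h.1, h.2⟩
  invFun := fun z => match z with
    | .inl ⟨e, he⟩ => ⟨.inl e, Nat.succ_pos _, he⟩
    | .inr ⟨b, hb⟩ => ⟨.inr b, Nat.succ_lt_succ hb.1, hb.2⟩
  left_inv := by rintro ⟨(e | b), h⟩ <;> rfl
  right_inv := by rintro (⟨e, he⟩ | ⟨b, hb⟩) <;> rfl

theorem fin_prefix (a : Act P) : ∀ (l₁ l₂ : List (CMSC P Msg)),
    (∀ N ∈ l₁, Finite N.E) →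
    Finite {x : ES (l₁ ++ l₂) //
      ESidx (l₁ ++ l₂) x < l₁.length ∧ ESlab (l₁ ++ l₂) x = a} := by
  intro l₁
  induction l₁ with
  | nil =>
    intro l₂ _
    have : IsEmpty {x : ES ([] ++ l₂) //
        ESidx ([] ++ l₂) x < ([] : List (CMSC P Msg)).length ∧ ESlab ([] ++ l₂) x = a} :=
      ⟨fun z => absurd z.2.1 (by simp)⟩
    infer_instance
  | cons N l₁ ih =>
    intro l₂ hfin
    have h1 : Finite N.E := hfin N (by simp)
    have h2 := ih l₂ (fun N' hN' => hfin N' (by simp [hN']))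
    have h3 : Finite {e : N.E // N.lab e = a} := Subtype.finite
    exact Finite.of_equiv _ (prefixEquiv N l₁ l₂ a).symm

theorem count_prefix (a : Act P) : ∀ (l₁ l₂ : List (CMSC P Msg)),
    (∀ N ∈ l₁, Finite N.E) →
    Nat.card {x : ES (l₁ ++ l₂) //
      ESidx (l₁ ++ l₂) x < l₁.length ∧ ESlab (l₁ ++ l₂) x = a} =
    (l₁.map fun N => Nat.card {e : N.E // N.lab e = a}).sum := by
  intro l₁
  induction l₁ with
  | nil =>
    intro l₂ _
    have : IsEmpty {x : ES ([] ++ l₂) //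
        ESidx ([] ++ l₂) x < ([] : List (CMSC P Msg)).length ∧ ESlab ([] ++ l₂) x = a} :=
      ⟨fun z => absurd z.2.1 (by simp)⟩
    simp [Nat.card_of_isEmpty]
  | cons N l₁ ih =>
    intro l₂ hfin
    have h1 : Finite N.E := hfin N (by simp)
    have h2 := fin_prefix a l₁ l₂ (fun N' hN' => hfin N' (by simp [hN']))
    have h3 : Finite {e : N.E // N.lab e = a} := Subtype.finite
    rw [Nat.card_congr (prefixEquiv N l₁ l₂ a), Nat.card_sum,
      ih l₂ (fun N' hN' => hfin N' (by simp [hN'])), List.map_cons, List.sum_cons]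

/-- Main structural lemma: a composition of a chain decomposes as the disjoint
sum of its factors, preserving labels, matching edges and cross-factor order. -/
theorem chain_emb : ∀ (l : List (CMSC P Msg)) (M : CMSC P Msg), ConcatChain l M →
    ∃ φ : M.E ≃ ES l,
      (∀ x, M.lab (φ.symm x) = ESlab l x) ∧
      (∀ x y, M.tri (φ.symm x) (φ.symm y) → EStri l x y ∨ ESidx l x < ESidx l y) ∧
      (∀ x y, EStri l x y → M.tri (φ.symm x) (φ.symm y)) ∧
      (∀ x y, ESidx l x < ESidx l y → (ESlab l x).proc = (ESlab l y).proc →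
        M.le (φ.symm x) (φ.symm y)) := by
  intro l
  induction l with
  | nil => intro M h; exact absurd h (by simp [ConcatChain])
  | cons N l ih =>
    intro M hM
    cases l with
    | nil =>
      have hMN : M = N := hM
      subst hMN
      refine ⟨(Equiv.sumEmpty M.E Empty).symm, ?_, ?_, ?_, ?_⟩
      · rintro (a | b)
        · rfl
        · exact b.elim
      · rintro (a | b) (a' | b') h
        · exact Or.inl h
        · exact b'.elim
        · exact b.elim
        · exact b.elim
      · rintro (a | b) (a' | b') h
        · exact h
        · exact b'.elim
        · exact b.elim
        · exact b.elim
      · rintro (a | b) (a' | b') h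
        · exact absurd h (by simp [ESidx])
        · exact b'.elim
        · exact b.elim
        · exact b.elim
    | cons N' l' =>
      obtain ⟨M', hM', ⟨c⟩⟩ := hM
      obtain ⟨φ', hlab', htri', hmtri', hle'⟩ := ih M' hM'
      refine ⟨c.eqv.trans (Equiv.sumCongr (Equiv.refl N.E) φ'), ?_, ?_, ?_, ?_⟩
      · rintro (a | b)
        · show M.lab (c.eqv.symm (Sum.inl a)) = N.lab a
          rw [c.lab_eq]; simp
        · show M.lab (c.eqv.symm (Sum.inr (φ'.symm b))) = ESlab (N' :: l') b
          rw [c.lab_eq]; simp [hlab']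
      · rintro (a | b) (a' | b') h
        · have h' : M.tri (c.eqv.symm (Sum.inl a)) (c.eqv.symm (Sum.inl a')) := h
          exact Or.inl (show EStri (N :: N' :: l') (Sum.inl a) (Sum.inl a') from
            (c.tri_left a a').mp h')
        · exact Or.inr (Nat.succ_pos _)
        · have h' : M.tri (c.eqv.symm (Sum.inr (φ'.symm b))) (c.eqv.symm (Sum.inl a')) := h
          exact absurd h' (c.tri_back _ _)
        · have h' : M.tri (c.eqv.symm (Sum.inr (φ'.symm b))) (c.eqv.symm (Sum.inr (φ'.symm b'))) := h
          rcases htri' b b' ((c.tri_right _ _).mp h') with h1 | h1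
          · exact Or.inl h1
          · exact Or.inr (Nat.succ_lt_succ h1)
      · rintro (a | b) (a' | b') h
        · show M.tri (c.eqv.symm (Sum.inl a)) (c.eqv.symm (Sum.inl a'))
          exact (c.tri_left a a').mpr h
        · exact absurd h (by simp [EStri])
        · exact absurd h (by simp [EStri])
        · show M.tri (c.eqv.symm (Sum.inr (φ'.symm b))) (c.eqv.symm (Sum.inr (φ'.symm b')))
          exact (c.tri_right _ _).mpr (hmtri' b b' h)
      · rintro (a | b) (a' | b') hidx hproc
        · exact absurd hidx (by simp [ESidx])
        · show M.le (c.eqv.symm (Sum.inl a)) (c.eqv.symm (Sum.inr (φ'.symm b')))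
          have h1 : (N.lab a).proc = (ESlab (N' :: l') b').proc := hproc
          rw [← hlab' b'] at h1
          exact c.le_cross a _ h1
        · exact absurd hidx (by simp [ESidx])
        · show M.le (c.eqv.symm (Sum.inr (φ'.symm b))) (c.eqv.symm (Sum.inr (φ'.symm b')))
          have hidx' : ESidx (N' :: l') b < ESidx (N' :: l') b' := by
            have h2 : ESidx (N' :: l') b + 1 < ESidx (N' :: l') b' + 1 := hidx
            omega
          have hproc' : (ESlab (N' :: l') b).proc = (ESlab (N' :: l') b').proc := hproc
          have hproc'' : (M'.lab (φ'.symm b)).proc = (M'.lab (φ'.symm b')).proc := by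
            rw [hlab' b, hlab' b']; exact hproc'
          exact (c.le_right _ _ hproc'').mpr (hle' b b' hidx' hproc')

end Aux

/-- in the two-counter-machine simulation, if a composition
`Ns ++ [Z] ++ Ms` yields a complete MSC where `Z` is a zero-test cMSC (a single
complete message from `p₁` to `p₁'`), then in the prefix `Ns` the number of
`p₁!p₁'`-events equals the number of `p₁'?p₁`-events: the zero-test can only be
taken when the channel `(p₁, p₁')` is empty. -/
theorem zero_test_channel_empty {P Msg : Type} (p₁ p₁' : P) (hne : p₁ ≠ p₁')
    (Ns Ms : List (CMSC P Msg)) (hfin : ∀ N ∈ Ns, Finite N.E)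
    (Z : CMSC P Msg)
    (hZ : ∃ e f : Z.E, Z.tri e f ∧ Z.lab e = Act.send p₁ p₁' ∧
      ∀ x : Z.E, x = e ∨ x = f)
    (M : CMSC P Msg) (hM : ConcatChain (Ns ++ Z :: Ms) M) (hC : M.Complete) :
    (Ns.map fun N => Nat.card {e : N.E // N.lab e = Act.send p₁ p₁'}).sum =
    (Ns.map fun N => Nat.card {e : N.E // N.lab e = Act.recv p₁' p₁}).sum := by
  classical
  obtain ⟨e, f, he, hel, hall⟩ := hZ
  obtain ⟨φ, hlab, htri, hmtri, hle⟩ := chain_emb (Ns ++ Z :: Ms) M hM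
  -- the label of the receive in Z
  have hfl : Z.lab f = Act.recv p₁' p₁ := by
    obtain ⟨p, q, h1, h2⟩ := Z.tri_lab he
    rw [hel] at h1
    obtain ⟨hp, hq⟩ : p₁ = p ∧ p₁' = q := by constructor <;> injection h1
    rw [h2, ← hp, ← hq]
  -- the images of Z's events
  set xe : ES (Ns ++ Z :: Ms) := emb2 Ns (Z :: Ms) (Sum.inl e) with hxe
  set xf : ES (Ns ++ Z :: Ms) := emb2 Ns (Z :: Ms) (Sum.inl f) with hxf
  have hlab_xe : ESlab (Ns ++ Z :: Ms) xe = Act.send p₁ p₁' := by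
    rw [hxe]; exact (emb2_lab Ns (Z :: Ms) _).trans hel
  have hlab_xf : ESlab (Ns ++ Z :: Ms) xf = Act.recv p₁' p₁ := by
    rw [hxf]; exact (emb2_lab Ns (Z :: Ms) _).trans hfl
  have hidx_xe : ESidx (Ns ++ Z :: Ms) xe = Ns.length := by rw [hxe]; have h := emb2_idx Ns (Z :: Ms) (Sum.inl e); exact h
  have hidx_xf : ESidx (Ns ++ Z :: Ms) xf = Ns.length := by rw [hxf]; have h := emb2_idx Ns (Z :: Ms) (Sum.inl f); exact h
  have htriZ : M.tri (φ.symm xe) (φ.symm xf) :=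
    hmtri xe xf (emb2_tri Ns (Z :: Ms) (Sum.inl e) (Sum.inl f) he)
  -- every prefix send is matched to a prefix receive
  have hmatch : ∀ x : ES (Ns ++ Z :: Ms), ESidx (Ns ++ Z :: Ms) x < Ns.length → ESlab (Ns ++ Z :: Ms) x = Act.send p₁ p₁' →
      ∃ y : ES (Ns ++ Z :: Ms), (ESidx (Ns ++ Z :: Ms) y < Ns.length ∧ ESlab (Ns ++ Z :: Ms) y = Act.recv p₁' p₁) ∧
        M.tri (φ.symm x) (φ.symm y) := by
    intro x hxidx hxlab
    by_cases hex : ∃ g, M.tri (φ.symm x) g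
    · obtain ⟨g, hg⟩ := hex
      have hgy : M.tri (φ.symm x) (φ.symm (φ g)) := by simpa using hg
      set y : ES (Ns ++ Z :: Ms) := φ g with hy
      have hylab : ESlab (Ns ++ Z :: Ms) y = Act.recv p₁' p₁ := by
        obtain ⟨p, q, h1, h2⟩ := M.tri_lab hgy
        rw [hlab x, hxlab] at h1
        obtain ⟨hp, hq⟩ : p₁ = p ∧ p₁' = q := by constructor <;> injection h1
        rw [← hlab y, h2, ← hp, ← hq]
      have hxy : ESidx (Ns ++ Z :: Ms) x ≤ ESidx (Ns ++ Z :: Ms) y := by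
        rcases htri x y hgy with h1 | h1
        · exact le_of_eq (EStri_idx (Ns ++ Z :: Ms) x y h1)
        · exact le_of_lt h1
      have hylt : ESidx (Ns ++ Z :: Ms) y < Ns.length := by
        rcases Nat.lt_trichotomy (ESidx (Ns ++ Z :: Ms) y) Ns.length with h1 | h1 | h1
        · exact h1
        · obtain ⟨z, hz⟩ := idx_eq_imp Ns Z Ms y h1
          have hzf : z = f := by
            rcases hall z with h2 | h2
            · exfalso
              rw [hz] at hylab; replace hylab := (emb2_lab Ns (Z :: Ms) _).symm.trans hylab
              have : Z.lab z = Act.recv p₁' p₁ := hylab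
              rw [h2, hel] at this
              exact absurd this (by simp)
            · exact h2
          rw [hzf] at hz
          have hxeq : φ.symm x = φ.symm xe := by
            apply tri_unique_left M hgy
            rw [hz, ← hxf]
            exact htriZ
          have : x = xe := φ.symm.injective hxeq
          rw [this, hidx_xe] at hxidx
          omega
        · exfalso
          have hle1 : M.le (φ.symm x) (φ.symm xe) := by
            refine hle x xe (by omega) ?_
            rw [hxlab, hlab_xe]
          have hfifo := M.fifo hgy htriZ
            (by rw [hlab x]; exact hxlab) (by rw [hlab xe]; exact hlab_xe)
          have hle2 : M.le (φ.symm y) (φ.symm xf) := hfifo.mp hle1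
          have hle3 : M.le (φ.symm xf) (φ.symm y) := by
            refine hle xf y (by omega) ?_
            rw [hlab_xf, hylab]
          have : y = xf := φ.symm.injective (M.le_antisymm hle2 hle3)
          rw [this, hidx_xf] at h1
          omega
      exact ⟨y, ⟨hylt, hylab⟩, hgy⟩
    · exfalso
      refine hC (φ.symm x) ⟨fun g hg => hex ⟨g, hg⟩, fun g hg => ?_⟩
      obtain ⟨p, q, h1, h2⟩ := M.tri_lab hg
      rw [hlab x, hxlab] at h2
      exact absurd h2 (by simp)
  -- every prefix receive is matched by a prefix send
  have hmatch' : ∀ y : ES (Ns ++ Z :: Ms), ESidx (Ns ++ Z :: Ms) y < Ns.length → ESlab (Ns ++ Z :: Ms) y = Act.recv p₁' p₁ →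
      ∃ x : ES (Ns ++ Z :: Ms), (ESidx (Ns ++ Z :: Ms) x < Ns.length ∧ ESlab (Ns ++ Z :: Ms) x = Act.send p₁ p₁') ∧
        M.tri (φ.symm x) (φ.symm y) := by
    intro y hyidx hylab
    by_cases hex : ∃ g, M.tri g (φ.symm y)
    · obtain ⟨g, hg⟩ := hex
      have hgx : M.tri (φ.symm (φ g)) (φ.symm y) := by simpa using hg
      set x : ES (Ns ++ Z :: Ms) := φ g with hx
      have hxlab : ESlab (Ns ++ Z :: Ms) x = Act.send p₁ p₁' := by
        obtain ⟨p, q, h1, h2⟩ := M.tri_lab hgx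
        rw [hlab y, hylab] at h2
        obtain ⟨hq, hp⟩ : p₁' = q ∧ p₁ = p := by constructor <;> injection h2
        rw [← hlab x, h1, ← hp, ← hq]
      have hxlt : ESidx (Ns ++ Z :: Ms) x < Ns.length := by
        rcases htri x y hgx with h1 | h1
        · rw [EStri_idx (Ns ++ Z :: Ms) x y h1]; exact hyidx
        · omega
      exact ⟨x, ⟨hxlt, hxlab⟩, hgx⟩
    · exfalso
      refine hC (φ.symm y) ⟨fun g hg => ?_, fun g hg => hex ⟨g, hg⟩⟩
      obtain ⟨p, q, h1, h2⟩ := M.tri_lab hg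
      rw [hlab y, hylab] at h1
      exact absurd h1 (by simp)
  -- the bijection between prefix sends and prefix receives
  set S := {x : ES (Ns ++ Z :: Ms) // ESidx (Ns ++ Z :: Ms) x < Ns.length ∧ ESlab (Ns ++ Z :: Ms) x = Act.send p₁ p₁'} with hS
  set R := {x : ES (Ns ++ Z :: Ms) // ESidx (Ns ++ Z :: Ms) x < Ns.length ∧ ESlab (Ns ++ Z :: Ms) x = Act.recv p₁' p₁} with hR
  have key : Nat.card S = Nat.card R := by
    have hbij : Function.Bijective
        (fun x : S => (⟨(hmatch x.1 x.2.1 x.2.2).choose,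
          (hmatch x.1 x.2.1 x.2.2).choose_spec.1⟩ : R)) := by
      constructor
      · intro x x' hxx'
        have h1 := (hmatch x.1 x.2.1 x.2.2).choose_spec.2
        have h2 := (hmatch x'.1 x'.2.1 x'.2.2).choose_spec.2
        have heq : (hmatch x.1 x.2.1 x.2.2).choose = (hmatch x'.1 x'.2.1 x'.2.2).choose :=
          congrArg Subtype.val hxx'
        rw [heq] at h1
        exact Subtype.ext (φ.symm.injective (tri_unique_left M h1 h2))
      · intro y
        obtain ⟨x, hx, htr⟩ := hmatch' y.1 y.2.1 y.2.2
        refine ⟨⟨x, hx⟩, ?_⟩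
        have h1 := (hmatch x hx.1 hx.2).choose_spec.2
        apply Subtype.ext
        exact φ.symm.injective (tri_unique_right M h1 htr)
    exact Nat.card_eq_of_bijective _ hbij
  have c1 := count_prefix (P := P) (Msg := Msg) (Act.send p₁ p₁') Ns (Z :: Ms) hfin
  have c2 := count_prefix (P := P) (Msg := Msg) (Act.recv p₁' p₁) Ns (Z :: Ms) hfin
  rw [← c1, ← c2]
  exact key

end HMSCPaper
end

section
/- EMSO-definable languages of cMSCs are closed under concatenation: if L₁ and L₂ are EMSO-definable (L₁ over finite cMSCs), then L₁ ∘ L₂ is EMSO-definable; moreover the witnessing sentence can be taken of the form ∃W ∃Y_{m₁}...∃Y_{m_ℓ} ∃X₁...∃X_k. ψ where ψ is first-order. -/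
namespace HMSCPaper

/-- First-order formulas over cMSCs: variables are natural numbers; first-order
variables and set variables are indexed by `ℕ` (set variables are the
existentially quantified second-order variables of an EMSO sentence). -/
inductive FO (P Msg : Type) where
  | le : ℕ → ℕ → FO P Msg                -- x ≤ y
  | succ : ℕ → ℕ → FO P Msg              -- x → y (direct process successor)
  | tri : ℕ → ℕ → FO P Msg               -- x ◁ y
  | act : Act P → ℕ → FO P Msg           -- p!q(x), p?q(x)
  | msg : Msg → ℕ → FO P Msg             -- m(x), for unmatched x with message m
  | mem : ℕ → ℕ → FO P Msg               -- x ∈ X_i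
  | or : FO P Msg → FO P Msg → FO P Msg
  | and : FO P Msg → FO P Msg → FO P Msg
  | not : FO P Msg → FO P Msg
  | ex : ℕ → FO P Msg → FO P Msg
  | all : ℕ → FO P Msg → FO P Msg

/-- Free first-order variables of a formula. -/
def FO.free {P Msg : Type} : FO P Msg → List ℕ
  | .le x y => [x, y]
  | .succ x y => [x, y]
  | .tri x y => [x, y]
  | .act _ x => [x]
  | .msg _ x => [x]
  | .mem x _ => [x]
  | .or φ ψ => φ.free ++ ψ.free
  | .and φ ψ => φ.free ++ ψ.free
  | .not φ => φ.free
  | .ex n φ => φ.free.filter (· ≠ n)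
  | .all n φ => φ.free.filter (· ≠ n)

/-- Satisfaction of a first-order formula in a cMSC `M` under a first-order
valuation `ν` and a second-order valuation `ξ`. -/
def FOSat {P Msg : Type} (M : CMSC P Msg) :
    FO P Msg → (ℕ → M.E) → (ℕ → Set M.E) → Prop
  | .le x y, ν, _ => M.le (ν x) (ν y)
  | .succ x y, ν, _ =>
      (M.lab (ν x)).proc = (M.lab (ν y)).proc ∧ M.le (ν x) (ν y) ∧ ν x ≠ ν y ∧
      ∀ c, (M.lab c).proc = (M.lab (ν x)).proc →
        M.le (ν x) c → M.le c (ν y) → c = ν x ∨ c = ν y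
  | .tri x y, ν, _ => M.tri (ν x) (ν y)
  | .act α x, ν, _ => M.lab (ν x) = α
  | .msg m x, ν, _ => M.msg (ν x) = some m
  | .mem x i, ν, ξ => ν x ∈ ξ i
  | .or φ ψ, ν, ξ => FOSat M φ ν ξ ∨ FOSat M ψ ν ξ
  | .and φ ψ, ν, ξ => FOSat M φ ν ξ ∧ FOSat M ψ ν ξ
  | .not φ, ν, ξ => ¬ FOSat M φ ν ξ
  | .ex n φ, ν, ξ => ∃ e : M.E, FOSat M φ (Function.update ν n e) ξ
  | .all n φ, ν, ξ => ∀ e : M.E, FOSat M φ (Function.update ν n e) ξ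

/-- `M` satisfies the EMSO sentence `∃ X₀ X₁ ⋯ . φ` (all set variables of the
first-order kernel `φ` are existentially quantified). -/
def EMSOSat {P Msg : Type} (M : CMSC P Msg) (φ : FO P Msg) : Prop :=
  ∃ ξ : ℕ → Set M.E, ∀ ν : ℕ → M.E, FOSat M φ ν ξ

/-- A language of cMSCs is EMSO-definable if it is the language of an
EMSO sentence (closed first-order kernel, prefixed by existential
set quantifiers). -/
def EMSODefinable {P Msg : Type} (L : Set (CMSC P Msg)) : Prop :=
  ∃ φ : FO P Msg, φ.free = [] ∧ ∀ M, M ∈ L ↔ EMSOSat M φ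

end HMSCPaper

namespace HMSCPaper

/-- The concatenation of two cMSC languages. -/
def ConcatLang {P Msg : Type} (L₁ L₂ : Set (CMSC P Msg)) : Set (CMSC P Msg) :=
  {M | ∃ M₁ ∈ L₁, ∃ M₂ ∈ L₂, ConcatMem M₁ M₂ M}

/-! ### Auxiliary development for the proof of `emso_concat` -/

section Aux

variable {P Msg : Type}

/-- The one-step relation generating the order of a cMSC. -/
def CMSC.step (M : CMSC P Msg) (a b : M.E) : Prop :=
  M.tri a b ∨ ((M.lab a).proc = (M.lab b).proc ∧ M.le a b ∧ a ≠ b ∧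
    ∀ c, (M.lab c).proc = (M.lab a).proc → M.le a c → M.le c b → c = a ∨ c = b)

lemma CMSC.le_iff_step (M : CMSC P Msg) (e f : M.E) :
    M.le e f ↔ Relation.ReflTransGen M.step e f := M.le_gen e f

lemma CMSC.step_le {M : CMSC P Msg} {a b : M.E} (h : M.step a b) : M.le a b := by
  rcases h with h | h
  · exact M.tri_le h
  · exact h.2.1

lemma CMSC.tri_func {M : CMSC P Msg} {e f f' : M.E}
    (h : M.tri e f) (h' : M.tri e f') : f = f' := by
  obtain ⟨p, q, he, -⟩ := M.tri_lab h
  exact M.le_antisymm ((M.fifo h h' he he).1 (M.le_refl e))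
    ((M.fifo h' h he he).1 (M.le_refl e))

lemma CMSC.tri_inj {M : CMSC P Msg} {e e' f : M.E}
    (h : M.tri e f) (h' : M.tri e' f) : e = e' := by
  obtain ⟨p, q, he, hf⟩ := M.tri_lab h
  obtain ⟨p', q', he', hf'⟩ := M.tri_lab h'
  rw [hf] at hf'; cases hf'
  exact M.le_antisymm ((M.fifo h h' he he').2 (M.le_refl f))
    ((M.fifo h' h he' he).2 (M.le_refl f))

lemma CMSC.msg_of_matched {M : CMSC P Msg} {e : M.E}
    (h : ¬ M.Unmatched e) : M.msg e = none := by
  by_contra hn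
  exact h ((M.msg_dom e).1 hn)

lemma CMSC.msg_of_unmatched {M : CMSC P Msg} {e : M.E}
    (h : M.Unmatched e) : ∃ m, M.msg e = some m := by
  have := (M.msg_dom e).2 h
  cases hm : M.msg e with
  | none => exact absurd hm this
  | some m => exact ⟨m, rfl⟩

end Aux

section Restrict

variable {P Msg : Type} {M : CMSC P Msg} {S : Set M.E}

/-- The one-step relation of the restriction of `M` to `S`. -/
def RStep (M : CMSC P Msg) (S : Set M.E) (a b : ↥S) : Prop :=
  M.tri ↑a ↑b ∨ ((M.lab ↑a).proc = (M.lab ↑b).proc ∧ M.le ↑a ↑b ∧ a ≠ b ∧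
    ∀ c : ↥S, (M.lab ↑c).proc = (M.lab ↑a).proc → M.le ↑a ↑c → M.le ↑c ↑b →
      c = a ∨ c = b)

variable (hconv : ∀ a c b, a ∈ S → b ∈ S → M.le a c → M.le c b → c ∈ S)

lemma rstep_of_step {a b : ↥S} (h : M.step ↑a ↑b) : RStep M S a b := by
  rcases h with h | ⟨h1, h2, h3, h4⟩
  · exact Or.inl h
  · refine Or.inr ⟨h1, h2, fun hc => h3 (congrArg Subtype.val hc),
      fun c hc hac hcb => ?_⟩
    rcases h4 ↑c hc hac hcb with h | h
    · exact Or.inl (Subtype.ext h)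
    · exact Or.inr (Subtype.ext h)

include hconv

lemma step_of_rstep {a b : ↥S} (h : RStep M S a b) : M.step ↑a ↑b := by
  rcases h with h | ⟨h1, h2, h3, h4⟩
  · exact Or.inl h
  · refine Or.inr ⟨h1, h2, fun hc => h3 (Subtype.ext hc), fun c hc hac hcb => ?_⟩
    have hcS : c ∈ S := hconv _ _ _ a.2 b.2 hac hcb
    rcases h4 ⟨c, hcS⟩ hc hac hcb with h | h
    · exact Or.inl (congrArg Subtype.val h)
    · exact Or.inr (congrArg Subtype.val h)

lemma rtg_rstep_of_le {a b : ↥S} (h : M.le ↑a ↑b) :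
    Relation.ReflTransGen (RStep M S) a b := by
  have h' := (M.le_iff_step (↑a) (↑b)).1 h
  have key : ∀ y, Relation.ReflTransGen M.step ↑a y →
      M.le y ↑b → ∀ hy : y ∈ S, Relation.ReflTransGen (RStep M S) a ⟨y, hy⟩ := by
    intro y hy
    induction hy with
    | refl =>
      intro _ hy
      have : (⟨↑a, hy⟩ : ↥S) = a := Subtype.ext rfl
      rw [this]
    | tail hac hcd IH =>
      rename_i c d
      intro hdb hd
      have hcb : M.le c ↑b := M.le_trans (CMSC.step_le hcd) hdb
      have hcS : c ∈ S := hconv _ _ _ a.2 b.2 ((M.le_iff_step _ _).2 hac) hcb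
      exact Relation.ReflTransGen.tail (IH hcb hcS) (rstep_of_step hcd)
  exact key ↑b h' (M.le_refl _) b.2

lemma le_of_rtg_rstep {a b : ↥S} (h : Relation.ReflTransGen (RStep M S) a b) :
    M.le ↑a ↑b := by
  induction h with
  | refl => exact M.le_refl _
  | tail _ hcd IH => exact M.le_trans IH (CMSC.step_le (step_of_rstep hconv hcd))

omit hconv

/-- Restriction of a cMSC to a convex nonempty set of events,
with a custom message labelling. -/
noncomputable def CMSC.restrict (M : CMSC P Msg) (S : Set M.E)
    (msg' : M.E → Option Msg)
    (hne : ∃ e, e ∈ S)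
    (hconv : ∀ a c b, a ∈ S → b ∈ S → M.le a c → M.le c b → c ∈ S)
    (hmsg : ∀ e, e ∈ S → (msg' e ≠ none ↔
      ((∀ f ∈ S, ¬ M.tri e f) ∧ (∀ f ∈ S, ¬ M.tri f e)))) : CMSC P Msg where
  E := ↥S
  le a b := M.le ↑a ↑b
  tri a b := M.tri ↑a ↑b
  lab a := M.lab ↑a
  msg a := msg' ↑a
  nonempty := ⟨⟨hne.choose, hne.choose_spec⟩⟩
  le_refl a := M.le_refl ↑a
  le_trans h h' := M.le_trans h h'
  le_antisymm h h' := Subtype.ext (M.le_antisymm h h')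
  proc_total a b h := M.proc_total ↑a ↑b h
  proc_wf := by
    intro e
    have : Finite {f : M.E // (M.lab f).proc = (M.lab ↑e).proc ∧ M.le f ↑e} :=
      M.proc_wf ↑e
    refine Finite.of_injective
      (fun x : {f : ↥S // (M.lab ↑f.1).proc = (M.lab ↑e).proc ∧ M.le ↑f.1 ↑e} =>
        (⟨↑x.1, x.2⟩ : {f : M.E // (M.lab f).proc = (M.lab ↑e).proc ∧ M.le f ↑e}))
      ?_
    intro x y h
    simp only [Subtype.mk.injEq] at h
    exact Subtype.ext (Subtype.ext h)
  tri_le h := M.tri_le h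
  tri_lab h := M.tri_lab h
  fifo h h' he he' := M.fifo h h' he he'
  msg_dom := by
    intro e
    rw [hmsg ↑e e.2]
    constructor
    · rintro ⟨h1, h2⟩
      exact ⟨fun f hf => h1 ↑f f.2 hf, fun f hf => h2 ↑f f.2 hf⟩
    · rintro ⟨h1, h2⟩
      exact ⟨fun f hfS hf => h1 ⟨f, hfS⟩ hf, fun f hfS hf => h2 ⟨f, hfS⟩ hf⟩
  le_gen := by
    intro e f
    constructor
    · exact fun h => rtg_rstep_of_le hconv h
    · exact fun h => le_of_rtg_rstep hconv h
  unm_late := by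
    intro e f g htri hunm
    by_cases hu : M.Unmatched ↑g
    · have := M.unm_late (↑g : M.E) htri hu
      exact ⟨fun hl => ⟨(this.1 hl).1, fun h => (this.1 hl).2 (congrArg Subtype.val h)⟩,
        fun hl => ⟨(this.2 hl).1, fun h => (this.2 hl).2 (congrArg Subtype.val h)⟩⟩
    · have : (∃ x, M.tri ↑g x) ∨ (∃ x, M.tri x ↑g) := by
        by_contra hc
        push_neg at hc
        exact hu ⟨hc.1, hc.2⟩
      rcases this with ⟨x, hgx⟩ | ⟨x, hxg⟩
      · -- g is an unmatched-in-S send, matched in M by x ∉ S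
        have hxS : x ∉ S := fun hxS => hunm.1 ⟨x, hxS⟩ hgx
        obtain ⟨p, q, hel, hfl⟩ := M.tri_lab htri
        obtain ⟨p2, q2, hgl, hxl⟩ := M.tri_lab hgx
        constructor
        · intro hlab
          have hpq : (Act.send p2 q2 : Act P) = Act.send p q := by
            rw [← hgl, hlab, hel]
          injection hpq with hp hq
          subst hp; subst hq
          have hfx : M.le ↑f x := by
            have hproc : (M.lab ↑f).proc = (M.lab x).proc := by rw [hfl, hxl]
            rcases M.proc_total ↑f x hproc with h | h
            · exact h
            · exact absurd (hconv ↑g x ↑f g.2 f.2 (M.tri_le hgx) h) hxS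
          refine ⟨(M.fifo htri hgx hel hgl).2 hfx, fun h => ?_⟩
          have : M.tri ↑e x := by rw [congrArg Subtype.val h]; exact hgx
          exact hxS ((CMSC.tri_func htri this) ▸ f.2)
        · intro hlab
          rw [hfl] at hlab
          rw [hgl] at hlab
          cases hlab
      · -- g is an unmatched-in-S receive, matched in M by x ∉ S
        have hxS : x ∉ S := fun hxS => hunm.2 ⟨x, hxS⟩ hxg
        obtain ⟨p, q, hel, hfl⟩ := M.tri_lab htri
        obtain ⟨p2, q2, hxl, hgl⟩ := M.tri_lab hxg
        constructor
        · intro hlab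
          rw [hel] at hlab
          rw [hgl] at hlab
          cases hlab
        · intro hlab
          have hpq : (Act.recv q2 p2 : Act P) = Act.recv q p := by
            rw [← hgl, hlab, hfl]
          injection hpq with hq hp
          subst hp; subst hq
          have hxe : M.le x ↑e := by
            have hproc : (M.lab x).proc = (M.lab ↑e).proc := by rw [hxl, hel]
            rcases M.proc_total x ↑e hproc with h | h
            · exact h
            · exact absurd (hconv ↑e x ↑g e.2 g.2 h (M.tri_le hxg)) hxS
          refine ⟨(M.fifo hxg htri hxl hel).1 hxe, fun h => ?_⟩
          have : M.tri x ↑f := by rw [← congrArg Subtype.val h]; exact hxg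
          exact hxS ((CMSC.tri_inj this htri) ▸ e.2)

end Restrict

section ConcatFacts

variable {P Msg : Type} {M₁ M₂ M : CMSC P Msg} (h : IsConcat M₁ M₂ M)

/-- Left injection determined by a concatenation witness. -/
def IsConcat.inL (a : M₁.E) : M.E := h.eqv.symm (Sum.inl a)
/-- Right injection determined by a concatenation witness. -/
def IsConcat.inR (b : M₂.E) : M.E := h.eqv.symm (Sum.inr b)

lemma IsConcat.inL_ne_inR (a : M₁.E) (b : M₂.E) : h.inL a ≠ h.inR b := by
  intro hq
  have := congrArg h.eqv hq
  simp only [IsConcat.inL, IsConcat.inR, Equiv.apply_symm_apply] at this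
  cases this

lemma IsConcat.inL_inj : Function.Injective h.inL := by
  intro a b hab
  have := congrArg h.eqv hab
  simpa only [IsConcat.inL, Equiv.apply_symm_apply, Sum.inl.injEq] using this

lemma IsConcat.inR_inj : Function.Injective h.inR := by
  intro a b hab
  have := congrArg h.eqv hab
  simpa only [IsConcat.inR, Equiv.apply_symm_apply, Sum.inr.injEq] using this

lemma IsConcat.cases (e : M.E) : (∃ a, e = h.inL a) ∨ (∃ b, e = h.inR b) := by
  rcases hx : h.eqv e with a | b
  · exact Or.inl ⟨a, by rw [IsConcat.inL, ← hx, Equiv.symm_apply_apply]⟩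
  · exact Or.inr ⟨b, by rw [IsConcat.inR, ← hx, Equiv.symm_apply_apply]⟩

lemma IsConcat.lab_inL (a : M₁.E) : M.lab (h.inL a) = M₁.lab a := by
  have := h.lab_eq (h.inL a)
  rwa [IsConcat.inL, Equiv.apply_symm_apply] at this

lemma IsConcat.lab_inR (b : M₂.E) : M.lab (h.inR b) = M₂.lab b := by
  have := h.lab_eq (h.inR b)
  rwa [IsConcat.inR, Equiv.apply_symm_apply] at this

lemma IsConcat.step_from_inR {a : M₂.E} {y : M.E} (hs : M.step (h.inR a) y) :
    ∃ b, y = h.inR b := by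
  rcases h.cases y with ⟨c, rfl⟩ | hy
  · exfalso
    rcases hs with hs | ⟨h1, h2, h3, _⟩
    · exact h.tri_back a c hs
    · refine h3 (M.le_antisymm h2 (h.le_cross c a ?_))
      rw [← h.lab_inL, ← h.lab_inR]
      exact h1.symm
  · exact hy

lemma IsConcat.not_le_inR_inL (a : M₂.E) (b : M₁.E) : ¬ M.le (h.inR a) (h.inL b) := by
  intro hle
  have key : ∀ y, Relation.ReflTransGen M.step (h.inR a) y → ∃ c, y = h.inR c := by
    intro y hy
    induction hy with
    | refl => exact ⟨a, rfl⟩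
    | tail _ hcd IH =>
      obtain ⟨c, rfl⟩ := IH
      exact h.step_from_inR hcd
  obtain ⟨c, hc⟩ := key _ ((M.le_iff_step _ _).1 hle)
  exact h.inL_ne_inR b c hc

lemma IsConcat.step_into_inL {x : M.E} {b : M₁.E} (hs : M.step x (h.inL b)) :
    ∃ a, x = h.inL a := by
  rcases h.cases x with hx | ⟨c, rfl⟩
  · exact hx
  · exfalso
    rcases hs with hs | ⟨_, h2, _, _⟩
    · exact h.tri_back c b hs
    · exact h.not_le_inR_inL c b h2

lemma IsConcat.step_inL {a b : M₁.E} : M.step (h.inL a) (h.inL b) ↔ M₁.step a b := by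
  constructor
  · rintro (hs | ⟨h1, h2, h3, h4⟩)
    · exact Or.inl ((h.tri_left a b).1 hs)
    · have hproc : (M₁.lab a).proc = (M₁.lab b).proc := by
        rwa [h.lab_inL, h.lab_inL] at h1
      refine Or.inr ⟨hproc, (h.le_left a b hproc).1 h2,
        fun he => h3 (congrArg h.inL he), fun c hc hac hcb => ?_⟩
      have h5 := h4 (h.inL c) (by rw [h.lab_inL, h.lab_inL]; exact hc)
        ((h.le_left a c hc.symm).2 hac) ((h.le_left c b (hc.trans hproc)).2 hcb)
      rcases h5 with h5 | h5
      · exact Or.inl (h.inL_inj h5)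
      · exact Or.inr (h.inL_inj h5)
  · rintro (hs | ⟨h1, h2, h3, h4⟩)
    · exact Or.inl ((h.tri_left a b).2 hs)
    · refine Or.inr ⟨by rw [h.lab_inL, h.lab_inL]; exact h1,
        (h.le_left a b h1).2 h2, fun he => h3 (h.inL_inj he), fun c hc hac hcb => ?_⟩
      rcases h.cases c with ⟨d, rfl⟩ | ⟨d, rfl⟩
      · have hd : (M₁.lab d).proc = (M₁.lab a).proc := by
          rwa [h.lab_inL, h.lab_inL] at hc
        have h5 := h4 d hd ((h.le_left a d hd.symm).1 hac)
          ((h.le_left d b (hd.trans h1)).1 hcb)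
        rcases h5 with h5 | h5
        · exact Or.inl (congrArg h.inL h5)
        · exact Or.inr (congrArg h.inL h5)
      · exact absurd hcb (h.not_le_inR_inL d b)

lemma IsConcat.le_inL {a b : M₁.E} : M.le (h.inL a) (h.inL b) ↔ M₁.le a b := by
  constructor
  · intro hle
    have key : ∀ y, Relation.ReflTransGen M.step (h.inL a) y →
        ∀ c, y = h.inL c → M₁.le a c := by
      intro y hy
      induction hy with
      | refl =>
        intro c hc
        exact (h.inL_inj hc) ▸ M₁.le_refl a
      | tail hxy hyz IH =>
        intro c hc
        subst hc
        obtain ⟨d, rfl⟩ := h.step_into_inL hyz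
        exact M₁.le_trans (IH d rfl) (CMSC.step_le (h.step_inL.1 hyz))
    exact key _ ((M.le_iff_step _ _).1 hle) b rfl
  · intro hle
    have key : ∀ c, Relation.ReflTransGen M₁.step a c → M.le (h.inL a) (h.inL c) := by
      intro c hc
      induction hc with
      | refl => exact M.le_refl _
      | tail _ hcd IH => exact M.le_trans IH (CMSC.step_le (h.step_inL.2 hcd))
    exact key b ((M₁.le_iff_step a b).1 hle)

lemma IsConcat.step_inR {a b : M₂.E} : M.step (h.inR a) (h.inR b) ↔ M₂.step a b := by
  constructor
  · rintro (hs | ⟨h1, h2, h3, h4⟩)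
    · exact Or.inl ((h.tri_right a b).1 hs)
    · have hproc : (M₂.lab a).proc = (M₂.lab b).proc := by
        rwa [h.lab_inR, h.lab_inR] at h1
      refine Or.inr ⟨hproc, (h.le_right a b hproc).1 h2,
        fun he => h3 (congrArg h.inR he), fun c hc hac hcb => ?_⟩
      have h5 := h4 (h.inR c) (by rw [h.lab_inR, h.lab_inR]; exact hc)
        ((h.le_right a c hc.symm).2 hac) ((h.le_right c b (hc.trans hproc)).2 hcb)
      rcases h5 with h5 | h5
      · exact Or.inl (h.inR_inj h5)
      · exact Or.inr (h.inR_inj h5)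
  · rintro (hs | ⟨h1, h2, h3, h4⟩)
    · exact Or.inl ((h.tri_right a b).2 hs)
    · refine Or.inr ⟨by rw [h.lab_inR, h.lab_inR]; exact h1,
        (h.le_right a b h1).2 h2, fun he => h3 (h.inR_inj he), fun c hc hac hcb => ?_⟩
      rcases h.cases c with ⟨d, rfl⟩ | ⟨d, rfl⟩
      · exact absurd hac (h.not_le_inR_inL a d)
      · have hd : (M₂.lab d).proc = (M₂.lab a).proc := by
          rwa [h.lab_inR, h.lab_inR] at hc
        have h5 := h4 d hd ((h.le_right a d hd.symm).1 hac)
          ((h.le_right d b (hd.trans h1)).1 hcb)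
        rcases h5 with h5 | h5
        · exact Or.inl (congrArg h.inR h5)
        · exact Or.inr (congrArg h.inR h5)

lemma IsConcat.le_inR {a b : M₂.E} : M.le (h.inR a) (h.inR b) ↔ M₂.le a b := by
  constructor
  · intro hle
    have key : ∀ y, Relation.ReflTransGen M.step (h.inR a) y →
        ∃ c, y = h.inR c ∧ M₂.le a c := by
      intro y hy
      induction hy with
      | refl => exact ⟨a, rfl, M₂.le_refl a⟩
      | tail hxy hyz IH =>
        obtain ⟨c, rfl, hac⟩ := IH
        obtain ⟨d, rfl⟩ := h.step_from_inR hyz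
        exact ⟨d, rfl, M₂.le_trans hac (CMSC.step_le (h.step_inR.1 hyz))⟩
    obtain ⟨c, hc, hac⟩ := key _ ((M.le_iff_step _ _).1 hle)
    exact (h.inR_inj hc) ▸ hac
  · intro hle
    have key : ∀ c, Relation.ReflTransGen M₂.step a c → M.le (h.inR a) (h.inR c) := by
      intro c hc
      induction hc with
      | refl => exact M.le_refl _
      | tail _ hcd IH => exact M.le_trans IH (CMSC.step_le (h.step_inR.2 hcd))
    exact key b ((M₂.le_iff_step a b).1 hle)

lemma IsConcat.tri_from_inL {a : M₁.E} {x : M.E} (hs : M.tri (h.inL a) x) :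
    (∃ b, x = h.inL b ∧ M₁.tri a b) ∨ (∃ b, x = h.inR b) := by
  rcases h.cases x with ⟨b, rfl⟩ | hx
  · exact Or.inl ⟨b, rfl, (h.tri_left a b).1 hs⟩
  · exact Or.inr hx

lemma IsConcat.tri_into_inL {a : M₁.E} {x : M.E} (hs : M.tri x (h.inL a)) :
    ∃ b, x = h.inL b ∧ M₁.tri b a := by
  rcases h.cases x with ⟨b, rfl⟩ | ⟨b, rfl⟩
  · exact ⟨b, rfl, (h.tri_left b a).1 hs⟩
  · exact absurd hs (h.tri_back b a)

lemma IsConcat.tri_from_inR {a : M₂.E} {x : M.E} (hs : M.tri (h.inR a) x) :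
    ∃ b, x = h.inR b ∧ M₂.tri a b := by
  rcases h.cases x with ⟨b, rfl⟩ | ⟨b, rfl⟩
  · exact absurd hs (h.tri_back a b)
  · exact ⟨b, rfl, (h.tri_right a b).1 hs⟩

lemma IsConcat.tri_into_inR {a : M₂.E} {x : M.E} (hs : M.tri x (h.inR a)) :
    (∃ b, x = h.inR b ∧ M₂.tri b a) ∨ (∃ b, x = h.inL b) := by
  rcases h.cases x with hx | ⟨b, rfl⟩
  · exact Or.inr hx
  · exact Or.inl ⟨b, rfl, (h.tri_right b a).1 hs⟩

end ConcatFacts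

section Formulas

variable {P Msg : Type}

/-- Message constants occurring in a formula. -/
def FO.msgs : FO P Msg → List Msg
  | .msg m _ => [m]
  | .or φ ψ => φ.msgs ++ ψ.msgs
  | .and φ ψ => φ.msgs ++ ψ.msgs
  | .not φ => φ.msgs
  | .ex _ φ => φ.msgs
  | .all _ φ => φ.msgs
  | _ => []

/-- Relativization of a first-order formula: quantifiers are restricted by the
guard `g`, set variables are renamed by `ren`, and the message predicate `m(x)`
becomes `m(x) ∨ x ∈ Y_m` where `Y_m` has index `yr m`. -/
def rel (g : ℕ → FO P Msg) (ren : ℕ → ℕ) (yr : Msg → ℕ) : FO P Msg → FO P Msg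
  | .le x y => .le x y
  | .succ x y => .succ x y
  | .tri x y => .tri x y
  | .act α x => .act α x
  | .msg m x => .or (.msg m x) (.mem x (yr m))
  | .mem x i => .mem x (ren i)
  | .or φ ψ => .or (rel g ren yr φ) (rel g ren yr ψ)
  | .and φ ψ => .and (rel g ren yr φ) (rel g ren yr ψ)
  | .not φ => .not (rel g ren yr φ)
  | .ex n φ => .ex n (.and (g n) (rel g ren yr φ))
  | .all n φ => .all n (.or (.not (g n)) (rel g ren yr φ))

lemma mem_free_rel {g : ℕ → FO P Msg} {ren : ℕ → ℕ} {yr : Msg → ℕ}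
    (hg : ∀ n x, x ∈ (g n).free → x = n) :
    ∀ (φ : FO P Msg) (x : ℕ), x ∈ (rel g ren yr φ).free → x ∈ φ.free := by
  intro φ
  induction φ with
  | le a b => intro x hx; exact hx
  | succ a b => intro x hx; exact hx
  | tri a b => intro x hx; exact hx
  | act α a => intro x hx; exact hx
  | msg m a =>
    intro x hx
    simp only [rel, FO.free, List.mem_append, List.mem_singleton] at hx ⊢
    rcases hx with hx | hx <;> exact hx
  | mem a i => intro x hx; exact hx
  | or φ ψ IH1 IH2 =>
    intro x hx
    simp only [rel, FO.free, List.mem_append] at hx ⊢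
    rcases hx with hx | hx
    · exact Or.inl (IH1 x hx)
    · exact Or.inr (IH2 x hx)
  | and φ ψ IH1 IH2 =>
    intro x hx
    simp only [rel, FO.free, List.mem_append] at hx ⊢
    rcases hx with hx | hx
    · exact Or.inl (IH1 x hx)
    · exact Or.inr (IH2 x hx)
  | not φ IH => exact IH
  | ex n φ IH =>
    intro x hx
    simp only [rel, FO.free, List.mem_filter, List.mem_append, decide_eq_true_eq] at hx ⊢
    rcases hx with ⟨hx | hx, hxn⟩
    · exact absurd (hg n x hx) hxn
    · exact ⟨IH x hx, hxn⟩
  | all n φ IH =>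
    intro x hx
    simp only [rel, FO.free, List.mem_filter, List.mem_append, decide_eq_true_eq] at hx ⊢
    rcases hx with ⟨hx | hx, hxn⟩
    · exact absurd (hg n x hx) hxn
    · exact ⟨IH x hx, hxn⟩

lemma fosat_congr {M : CMSC P Msg} (φ : FO P Msg) :
    ∀ {ν ν' : ℕ → M.E} {ξ : ℕ → Set M.E},
    (∀ x ∈ φ.free, ν x = ν' x) → (FOSat M φ ν ξ ↔ FOSat M φ ν' ξ) := by
  induction φ with
  | le a b =>
    intro ν ν' ξ hν
    simp only [FO.free, List.mem_cons, List.mem_singleton] at hν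
    simp only [FOSat, hν a (by tauto), hν b (by tauto)]
  | succ a b =>
    intro ν ν' ξ hν
    simp only [FO.free, List.mem_cons, List.mem_singleton] at hν
    simp only [FOSat, hν a (by tauto), hν b (by tauto)]
  | tri a b =>
    intro ν ν' ξ hν
    simp only [FO.free, List.mem_cons, List.mem_singleton] at hν
    simp only [FOSat, hν a (by tauto), hν b (by tauto)]
  | act α a =>
    intro ν ν' ξ hν
    simp only [FO.free, List.mem_singleton] at hν
    simp only [FOSat, hν a (by tauto)]
  | msg m a =>
    intro ν ν' ξ hν
    simp only [FO.free, List.mem_singleton] at hν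
    simp only [FOSat, hν a (by tauto)]
  | mem a i =>
    intro ν ν' ξ hν
    simp only [FO.free, List.mem_singleton] at hν
    simp only [FOSat, hν a (by tauto)]
  | or φ ψ IH1 IH2 =>
    intro ν ν' ξ hν
    simp only [FO.free, List.mem_append] at hν
    simp only [FOSat]
    rw [IH1 (fun x hx => hν x (Or.inl hx)), IH2 (fun x hx => hν x (Or.inr hx))]
  | and φ ψ IH1 IH2 =>
    intro ν ν' ξ hν
    simp only [FO.free, List.mem_append] at hν
    simp only [FOSat]
    rw [IH1 (fun x hx => hν x (Or.inl hx)), IH2 (fun x hx => hν x (Or.inr hx))]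
  | not φ IH =>
    intro ν ν' ξ hν
    simp only [FOSat]
    rw [IH hν]
  | ex n φ IH =>
    intro ν ν' ξ hν
    simp only [FO.free] at hν
    simp only [FOSat]
    refine exists_congr fun e => IH fun x hx => ?_
    by_cases hxn : x = n
    · subst hxn; simp [Function.update]
    · simp only [Function.update, dif_neg hxn]
      exact hν x (List.mem_filter.mpr ⟨hx, by simpa using hxn⟩)
  | all n φ IH =>
    intro ν ν' ξ hν
    simp only [FO.free] at hν
    simp only [FOSat]
    refine forall_congr' fun e => IH fun x hx => ?_
    by_cases hxn : x = n
    · subst hxn; simp [Function.update]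
    · simp only [Function.update, dif_neg hxn]
      exact hν x (List.mem_filter.mpr ⟨hx, by simpa using hxn⟩)

lemma fosat_closed {M : CMSC P Msg} {φ : FO P Msg} (hφ : φ.free = [])
    {ν ν' : ℕ → M.E} {ξ : ℕ → Set M.E} :
    FOSat M φ ν ξ ↔ FOSat M φ ν' ξ :=
  fosat_congr φ (fun x hx => by rw [hφ] at hx; exact absurd hx List.not_mem_nil)

/-- The key relativization lemma. -/
lemma rel_correct {M N : CMSC P Msg} (ι : N.E → M.E) (T : Set M.E)
    (g : ℕ → FO P Msg) (ren : ℕ → ℕ) (yr : Msg → ℕ)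
    (ξM : ℕ → Set M.E) (ξN : ℕ → Set N.E)
    (hgsem : ∀ (n : ℕ) (ν : ℕ → M.E), FOSat M (g n) ν ξM ↔ ν n ∈ T)
    (hι : ∀ a, ι a ∈ T)
    (hsurj : ∀ e ∈ T, ∃ a, ι a = e)
    (hinj : Function.Injective ι)
    (hle : ∀ a b, M.le (ι a) (ι b) ↔ N.le a b)
    (htri : ∀ a b, M.tri (ι a) (ι b) ↔ N.tri a b)
    (hlab : ∀ a, M.lab (ι a) = N.lab a)
    (hconv : ∀ a c b, M.le (ι a) c → M.le c (ι b) → c ∈ T)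
    (hmem : ∀ i a, ι a ∈ ξM (ren i) ↔ a ∈ ξN i)
    (φ : FO P Msg) :
    ∀ ν : ℕ → N.E,
    (∀ m ∈ φ.msgs, ∀ a, (N.msg a = some m ↔
        (M.msg (ι a) = some m ∨ ι a ∈ ξM (yr m)))) →
    (FOSat M (rel g ren yr φ) (ι ∘ ν) ξM ↔ FOSat N φ ν ξN) := by
  induction φ with
  | le x y =>
    intro ν _
    simp only [rel, FOSat, Function.comp_apply]
    exact hle (ν x) (ν y)
  | succ x y =>
    intro ν _
    simp only [rel, FOSat, Function.comp_apply]
    constructor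
    · rintro ⟨h1, h2, h3, h4⟩
      refine ⟨by rwa [hlab, hlab] at h1, (hle _ _).1 h2, fun he => h3 (congrArg ι he),
        fun c hc hac hcb => ?_⟩
      have := h4 (ι c) (by rw [hlab, hlab]; exact hc) ((hle _ _).2 hac) ((hle _ _).2 hcb)
      rcases this with h' | h'
      · exact Or.inl (hinj h')
      · exact Or.inr (hinj h')
    · rintro ⟨h1, h2, h3, h4⟩
      refine ⟨by rw [hlab, hlab]; exact h1, (hle _ _).2 h2, fun he => h3 (hinj he),
        fun c hc hac hcb => ?_⟩
      obtain ⟨d, rfl⟩ := hsurj c (hconv _ _ _ hac hcb)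
      have hd : (N.lab d).proc = (N.lab (ν x)).proc := by rwa [hlab, hlab] at hc
      rcases h4 d hd ((hle _ _).1 hac) ((hle _ _).1 hcb) with h' | h'
      · exact Or.inl (congrArg ι h')
      · exact Or.inr (congrArg ι h')
  | tri x y =>
    intro ν _
    simp only [rel, FOSat, Function.comp_apply]
    exact htri (ν x) (ν y)
  | act α x =>
    intro ν _
    simp only [rel, FOSat, Function.comp_apply, hlab]
  | msg m x =>
    intro ν hmsg
    simp only [rel, FOSat, Function.comp_apply]
    exact (hmsg m (by simp [FO.msgs]) (ν x)).symm
  | mem x i =>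
    intro ν _
    simp only [rel, FOSat, Function.comp_apply]
    exact hmem i (ν x)
  | or φ ψ IH1 IH2 =>
    intro ν hmsg
    simp only [rel, FOSat]
    rw [IH1 ν (fun m hm => hmsg m (by simp [FO.msgs, hm])),
      IH2 ν (fun m hm => hmsg m (by simp [FO.msgs, hm]))]
  | and φ ψ IH1 IH2 =>
    intro ν hmsg
    simp only [rel, FOSat]
    rw [IH1 ν (fun m hm => hmsg m (by simp [FO.msgs, hm])),
      IH2 ν (fun m hm => hmsg m (by simp [FO.msgs, hm]))]
  | not φ IH =>
    intro ν hmsg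
    simp only [rel, FOSat]
    rw [IH ν hmsg]
  | ex n φ IH =>
    intro ν hmsg
    simp only [rel, FOSat]
    constructor
    · rintro ⟨e, hg', hφ⟩
      have heT : e ∈ T := by
        have := (hgsem n (Function.update (ι ∘ ν) n e)).1 hg'
        simpa using this
      obtain ⟨a, rfl⟩ := hsurj e heT
      have hup : Function.update (ι ∘ ν) n (ι a) = ι ∘ Function.update ν n a := by
        funext z
        by_cases hz : z = n <;> simp [Function.update, hz]
      rw [hup] at hφ
      exact ⟨a, (IH (Function.update ν n a) hmsg).1 hφ⟩
    · rintro ⟨a, hφ⟩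
      refine ⟨ι a, (hgsem n _).2 (by simpa using hι a), ?_⟩
      have hup : Function.update (ι ∘ ν) n (ι a) = ι ∘ Function.update ν n a := by
        funext z
        by_cases hz : z = n <;> simp [Function.update, hz]
      rw [hup]
      exact (IH (Function.update ν n a) hmsg).2 hφ
  | all n φ IH =>
    intro ν hmsg
    simp only [rel, FOSat]
    constructor
    · intro H a
      have hup : Function.update (ι ∘ ν) n (ι a) = ι ∘ Function.update ν n a := by
        funext z
        by_cases hz : z = n <;> simp [Function.update, hz]
      have := H (ι a)
      rcases this with hbad | hφ
      · exact absurd ((hgsem n _).2 (by simpa using hι a)) hbad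
      · rw [hup] at hφ
        exact (IH (Function.update ν n a) hmsg).1 hφ
    · intro H e
      by_cases heT : e ∈ T
      · obtain ⟨a, rfl⟩ := hsurj e heT
        refine Or.inr ?_
        have hup : Function.update (ι ∘ ν) n (ι a) = ι ∘ Function.update ν n a := by
          funext z
          by_cases hz : z = n <;> simp [Function.update, hz]
        rw [hup]
        exact (IH (Function.update ν n a) hmsg).2 (H a)
      · refine Or.inl fun hg' => heT ?_
        have := (hgsem n (Function.update (ι ∘ ν) n e)).1 hg'
        simpa using this

/-- A closed valid formula. -/
def trueFO : FO P Msg := .all 0 (.le 0 0)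
/-- A closed unsatisfiable formula. -/
def falseFO : FO P Msg := .ex 0 (.not (.le 0 0))

def bigAnd (l : List (FO P Msg)) : FO P Msg := l.foldr .and trueFO
def bigOr (l : List (FO P Msg)) : FO P Msg := l.foldr .or falseFO

lemma fosat_bigAnd {M : CMSC P Msg} {ν : ℕ → M.E} {ξ : ℕ → Set M.E}
    (l : List (FO P Msg)) :
    FOSat M (bigAnd l) ν ξ ↔ ∀ φ ∈ l, FOSat M φ ν ξ := by
  induction l with
  | nil =>
    simp only [bigAnd, List.foldr_nil, List.not_mem_nil, false_implies, implies_true,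
      iff_true, trueFO, FOSat]
    intro e
    simp only [Function.update, dif_pos rfl]
    exact M.le_refl e
  | cons a l IH =>
    simp only [bigAnd, List.foldr_cons, FOSat, List.mem_cons] at *
    rw [IH]
    constructor
    · rintro ⟨h1, h2⟩ φ (rfl | hφ)
      · exact h1
      · exact h2 φ hφ
    · intro H
      exact ⟨H a (Or.inl rfl), fun φ hφ => H φ (Or.inr hφ)⟩

lemma fosat_bigOr {M : CMSC P Msg} {ν : ℕ → M.E} {ξ : ℕ → Set M.E}
    (l : List (FO P Msg)) :
    FOSat M (bigOr l) ν ξ ↔ ∃ φ ∈ l, FOSat M φ ν ξ := by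
  induction l with
  | nil =>
    simp only [bigOr, List.foldr_nil, List.not_mem_nil, falseFO, FOSat]
    simp only [false_and, exists_false, iff_false, not_exists, not_not]
    intro e
    simp only [Function.update, dif_pos rfl]
    exact M.le_refl e
  | cons a l IH =>
    simp only [bigOr, List.foldr_cons, FOSat, List.mem_cons] at *
    rw [IH]
    constructor
    · rintro (h | ⟨φ, hφ, h⟩)
      · exact ⟨a, Or.inl rfl, h⟩
      · exact ⟨φ, Or.inr hφ, h⟩
    · rintro ⟨φ, (rfl | hφ), h⟩
      · exact Or.inl h
      · exact Or.inr ⟨φ, hφ, h⟩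

lemma mem_free_bigAnd {l : List (FO P Msg)} {x : ℕ}
    (hx : x ∈ (bigAnd l).free) : ∃ φ ∈ l, x ∈ φ.free := by
  induction l with
  | nil =>
    exfalso
    simp only [bigAnd, List.foldr_nil, trueFO, FO.free] at hx
    simp at hx
  | cons a l IH =>
    simp only [bigAnd, List.foldr_cons, FO.free, List.mem_append] at hx
    rcases hx with hx | hx
    · exact ⟨a, List.mem_cons_self, hx⟩
    · obtain ⟨φ, hφ, hxφ⟩ := IH hx
      exact ⟨φ, List.mem_cons_of_mem a hφ, hxφ⟩

lemma mem_free_bigOr {l : List (FO P Msg)} {x : ℕ}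
    (hx : x ∈ (bigOr l).free) : ∃ φ ∈ l, x ∈ φ.free := by
  induction l with
  | nil =>
    exfalso
    simp only [bigOr, List.foldr_nil, falseFO, FO.free] at hx
    simp at hx
  | cons a l IH =>
    simp only [bigOr, List.foldr_cons, FO.free, List.mem_append] at hx
    rcases hx with hx | hx
    · exact ⟨a, List.mem_cons_self, hx⟩
    · obtain ⟨φ, hφ, hxφ⟩ := IH hx
      exact ⟨φ, List.mem_cons_of_mem a hφ, hxφ⟩

end Formulas

section Guards

variable {P Msg : Type}

/-- x∈W nonempty guard. -/
def guardNonemptyW : FO P Msg := .ex 0 (.mem 0 0)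
def guardNonemptyC : FO P Msg := .ex 0 (.not (.mem 0 0))
/-- W is downward closed. -/
def guardDown : FO P Msg :=
  .all 0 (.all 1 (.not (.and (.le 0 1) (.and (.mem 1 0) (.not (.mem 0 0))))))
/-- x is source, y target of a new (cross) message edge. -/
def crossG (x y : ℕ) : FO P Msg :=
  .and (.tri x y) (.and (.mem x 0) (.not (.mem y 0)))
/-- endpoints of a cross edge agree on membership in `Y` (set index `j`). -/
def guardY (j : ℕ) : FO P Msg :=
  .all 0 (.all 1 (.or (.not (crossG 0 1))
    (.and (.or (.not (.mem 0 j)) (.mem 1 j)) (.or (.not (.mem 1 j)) (.mem 0 j)))))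
/-- `Y_j` only contains endpoints of cross edges. -/
def guardYsub (j : ℕ) : FO P Msg :=
  .all 0 (.or (.not (.mem 0 j)) (.or (.ex 1 (crossG 0 1)) (.ex 1 (crossG 1 0))))
/-- `Y_j` and `Y_j'` are disjoint. -/
def guardDisj (j j' : ℕ) : FO P Msg :=
  .all 0 (.not (.and (.mem 0 j) (.mem 0 j')))
/-- every cross send lies in some `Y`. -/
def guardExh (js : List ℕ) : FO P Msg :=
  .all 0 (.or (.not (.ex 1 (crossG 0 1))) (bigOr (js.map (fun j => .mem 0 j))))

variable {M : CMSC P Msg} {ξ : ℕ → Set M.E} {ν : ℕ → M.E}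

lemma guardNonemptyW_iff : FOSat M guardNonemptyW ν ξ ↔ ∃ x, x ∈ ξ 0 := by
  simp [guardNonemptyW, FOSat, Function.update]

lemma guardNonemptyC_iff : FOSat M guardNonemptyC ν ξ ↔ ∃ x, x ∉ ξ 0 := by
  simp [guardNonemptyC, FOSat, Function.update]

lemma guardDown_iff : FOSat M guardDown ν ξ ↔
    ∀ x y, M.le x y → y ∈ ξ 0 → x ∈ ξ 0 := by
  simp only [guardDown, FOSat, Function.update]
  constructor
  · intro H x y hle hy
    have h := H x y
    simp at h
    tauto
  · intro H x y
    simp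
    have h := H x y
    tauto

lemma guardY_iff {j : ℕ} : FOSat M (guardY j) ν ξ ↔
    ∀ x y, M.tri x y → x ∈ ξ 0 → y ∉ ξ 0 → (x ∈ ξ j ↔ y ∈ ξ j) := by
  simp only [guardY, crossG, FOSat, Function.update]
  constructor
  · intro H x y htri hx hy
    have h := H x y
    simp at h
    tauto
  · intro H x y
    simp
    have h := H x y
    tauto

lemma guardYsub_iff {j : ℕ} : FOSat M (guardYsub j) ν ξ ↔
    ∀ x, x ∈ ξ j → (∃ y, M.tri x y ∧ x ∈ ξ 0 ∧ y ∉ ξ 0) ∨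
      (∃ y, M.tri y x ∧ y ∈ ξ 0 ∧ x ∉ ξ 0) := by
  simp only [guardYsub, crossG, FOSat, Function.update]
  constructor
  · intro H x hx
    have := H x
    simp at this
    rcases this with h | h
    · exact absurd hx h
    · rcases h with ⟨y, hy⟩ | ⟨y, hy⟩
      · exact Or.inl ⟨y, hy⟩
      · exact Or.inr ⟨y, hy⟩
  · intro H x
    simp
    by_cases hx : x ∈ ξ j
    · rcases H x hx with ⟨y, hy⟩ | ⟨y, hy⟩
      · exact Or.inr (Or.inl ⟨y, hy.1, hy.2.1, hy.2.2⟩)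
      · exact Or.inr (Or.inr ⟨y, hy.1, hy.2.1, hy.2.2⟩)
    · exact Or.inl hx

lemma guardDisj_iff {j j' : ℕ} : FOSat M (guardDisj j j') ν ξ ↔
    ∀ x, ¬(x ∈ ξ j ∧ x ∈ ξ j') := by
  simp [guardDisj, FOSat, Function.update]

lemma guardExh_iff {js : List ℕ} : FOSat M (guardExh js) ν ξ ↔
    ∀ x, (∃ y, M.tri x y ∧ x ∈ ξ 0 ∧ y ∉ ξ 0) → ∃ j ∈ js, x ∈ ξ j := by
  simp only [guardExh, crossG, FOSat, Function.update]
  constructor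
  · intro H x hx
    have := H x
    rcases this with h | h
    · exfalso
      apply h
      obtain ⟨y, hy⟩ := hx
      refine ⟨y, ?_⟩
      simp [hy.1, hy.2.1, hy.2.2]
    · rw [fosat_bigOr] at h
      obtain ⟨φ, hφ, hsat⟩ := h
      simp only [List.mem_map] at hφ
      obtain ⟨j, hj, rfl⟩ := hφ
      refine ⟨j, hj, ?_⟩
      simpa [FOSat, Function.update] using hsat
  · intro H x
    by_cases hx : ∃ y, M.tri x y ∧ x ∈ ξ 0 ∧ y ∉ ξ 0
    · refine Or.inr ?_
      rw [fosat_bigOr]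
      obtain ⟨j, hj, hmem⟩ := H x hx
      refine ⟨.mem 0 j, List.mem_map.mpr ⟨j, hj, rfl⟩, ?_⟩
      simpa [FOSat, Function.update] using hmem
    · refine Or.inl ?_
      intro h
      apply hx
      obtain ⟨y, hy⟩ := h
      simp [Function.update] at hy
      exact ⟨y, hy.1, hy.2.1, hy.2.2⟩

end Guards

section MainDef

variable {P Msg : Type}

noncomputable def splitEquiv {α : Type} (S : Set α) : α ≃ (↥S ⊕ ↥(Sᶜ)) where
  toFun x := @dite _ (x ∈ S) (Classical.propDecidable _)
    (fun h => .inl ⟨x, h⟩) (fun h => .inr ⟨x, h⟩)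
  invFun := Sum.elim Subtype.val Subtype.val
  left_inv x := by
    by_cases h : x ∈ S
    · simp only [dif_pos h]; rfl
    · simp only [dif_neg h]; rfl
  right_inv x := by
    rcases x with ⟨x, h⟩ | ⟨x, h⟩
    · exact dif_pos h
    · exact dif_neg h

lemma splitEquiv_symm_inl {α : Type} {S : Set α} (a : ↥S) :
    (splitEquiv S).symm (.inl a) = ↑a := rfl

lemma splitEquiv_symm_inr {α : Type} {S : Set α} (a : ↥(Sᶜ)) :
    (splitEquiv S).symm (.inr a) = ↑a := rfl

lemma splitEquiv_apply_mem {α : Type} {S : Set α} {x : α} (h : x ∈ S) :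
    splitEquiv S x = .inl ⟨x, h⟩ := by
  simp only [splitEquiv, Equiv.coe_fn_mk]
  exact dif_pos h

lemma splitEquiv_apply_not_mem {α : Type} {S : Set α} {x : α} (h : x ∉ S) :
    splitEquiv S x = .inr ⟨x, h⟩ := by
  simp only [splitEquiv, Equiv.coe_fn_mk]
  exact dif_neg h

lemma find?_congr {α : Type} {p q : α → Bool} :
    ∀ l : List α, (∀ x ∈ l, p x = q x) → l.find? p = l.find? q := by
  intro l
  induction l with
  | nil => intro _; rfl
  | cons a l IH =>
    intro h
    have ha := h a (List.mem_cons_self)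
    by_cases hpa : p a = true
    · rw [List.find?_cons_of_pos hpa, List.find?_cons_of_pos (ha ▸ hpa)]
    · rw [List.find?_cons_of_neg hpa, List.find?_cons_of_neg (ha ▸ hpa)]
      exact IH fun x hx => h x (List.mem_cons_of_mem a hx)

variable [DecidableEq Msg]

/-- The `Y`-index of a message constant. -/
def yrF (ms : List Msg) (m : Msg) : ℕ := 1 + List.idxOf m ms

/-- The list of conjuncts of the constructed sentence. -/
noncomputable def mainList (φ₁ φ₂ : FO P Msg) : List (FO P Msg) :=
  let ms := φ₁.msgs ++ φ₂.msgs
  [rel (fun n => .mem n 0) (fun i => ms.length + 1 + 2 * i) (yrF ms) φ₁,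
   rel (fun n => .not (.mem n 0)) (fun i => ms.length + 2 + 2 * i) (yrF ms) φ₂,
   guardNonemptyW, guardNonemptyC, guardDown]
  ++ ms.map (fun m => guardY (yrF ms m))
  ++ ms.map (fun m => guardYsub (yrF ms m))
  ++ (ms.flatMap fun m => (ms.filter (fun m' => m' ≠ m)).map fun m' =>
        guardDisj (yrF ms m) (yrF ms m'))
  ++ (@ite _ (∀ m : Msg, m ∈ ms) (Classical.propDecidable _)
        [guardExh (ms.map (yrF ms))] [])

/-- The constructed EMSO kernel for the concatenation. -/
noncomputable def mainFO (φ₁ φ₂ : FO P Msg) : FO P Msg := bigAnd (mainList φ₁ φ₂)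

lemma guardNonemptyW_free : (guardNonemptyW : FO P Msg).free = [] := rfl
lemma guardNonemptyC_free : (guardNonemptyC : FO P Msg).free = [] := rfl
lemma guardDown_free : (guardDown : FO P Msg).free = [] := rfl
lemma guardY_free (j : ℕ) : (guardY j : FO P Msg).free = [] := rfl
lemma guardYsub_free (j : ℕ) : (guardYsub j : FO P Msg).free = [] := rfl
lemma guardDisj_free (j j' : ℕ) : (guardDisj j j' : FO P Msg).free = [] := rfl

lemma guardExh_free (js : List ℕ) : (guardExh js : FO P Msg).free = [] := by
  rw [List.eq_nil_iff_forall_not_mem]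
  intro x hx
  simp only [guardExh, crossG, FO.free, List.mem_filter, List.mem_append,
    decide_eq_true_eq] at hx
  obtain ⟨hx, hx0⟩ := hx
  rcases hx with hx | hx
  · simp only [List.mem_filter, List.mem_cons, List.mem_append, List.mem_singleton,
      decide_eq_true_eq, List.not_mem_nil, or_false] at hx
    rcases hx with ⟨hx, hx1⟩
    tauto
  · obtain ⟨φ, hφ, hxφ⟩ := mem_free_bigOr hx
    simp only [List.mem_map] at hφ
    obtain ⟨j, _, rfl⟩ := hφ
    simp only [FO.free, List.mem_singleton] at hxφ
    exact hx0 hxφ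

lemma rel_free_nil {g : ℕ → FO P Msg} {ren : ℕ → ℕ} {yr : Msg → ℕ}
    (hg : ∀ n x, x ∈ (g n).free → x = n) {φ : FO P Msg} (hφ : φ.free = []) :
    (rel g ren yr φ).free = [] := by
  rw [List.eq_nil_iff_forall_not_mem]
  intro x hx
  have := mem_free_rel hg φ x hx
  rw [hφ] at this
  exact List.not_mem_nil this

lemma mainList_free {φ₁ φ₂ : FO P Msg} (h1 : φ₁.free = []) (h2 : φ₂.free = []) :
    ∀ φ ∈ mainList φ₁ φ₂, φ.free = [] := by
  intro φ hφ
  simp only [mainList, List.mem_append] at hφ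
  rcases hφ with (((h | h) | h) | h) | h
  · simp only [List.mem_cons, List.not_mem_nil, or_false] at h
    rcases h with rfl | rfl | rfl | rfl | rfl
    · exact rel_free_nil (fun n x hx => by simpa [FO.free] using hx) h1
    · exact rel_free_nil (fun n x hx => by simpa [FO.free] using hx) h2
    · exact guardNonemptyW_free
    · exact guardNonemptyC_free
    · exact guardDown_free
  · obtain ⟨m, _, hEq⟩ := List.mem_map.1 h
    subst hEq
    exact guardY_free _
  · obtain ⟨m, _, hEq⟩ := List.mem_map.1 h
    subst hEq
    exact guardYsub_free _
  · obtain ⟨m, _, h⟩ := List.mem_flatMap.1 h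
    obtain ⟨m', _, hEq⟩ := List.mem_map.1 h
    subst hEq
    exact guardDisj_free _ _
  · by_cases hall : ∀ m : Msg, m ∈ φ₁.msgs ++ φ₂.msgs
    · rw [if_pos hall] at h
      simp only [List.mem_singleton] at h
      subst h
      exact guardExh_free _
    · rw [if_neg hall] at h
      exact absurd h List.not_mem_nil

lemma mainFO_free {φ₁ φ₂ : FO P Msg} (h1 : φ₁.free = []) (h2 : φ₂.free = []) :
    (mainFO φ₁ φ₂).free = [] := by
  rw [List.eq_nil_iff_forall_not_mem]
  intro x hx
  obtain ⟨φ, hφ, hxφ⟩ := mem_free_bigAnd hx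
  rw [mainList_free h1 h2 φ hφ] at hxφ
  exact List.not_mem_nil hxφ

end MainDef

section Chosen

variable {α Msg : Type}

open Classical in
noncomputable def chosenF (ms : List Msg) (Y : Msg → Set α) (x : α) : Option Msg :=
  match ms.find? (fun m => @decide (x ∈ Y m) (Classical.propDecidable _)) with
  | some m => some m
  | none => if h : ∃ m : Msg, m ∉ ms then some h.choose else none

lemma chosenF_eq_some_iff {ms : List Msg} {Y : Msg → Set α}
    (hDisj : ∀ m ∈ ms, ∀ m' ∈ ms, m ≠ m' → ∀ x, ¬(x ∈ Y m ∧ x ∈ Y m'))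
    {m : Msg} (hm : m ∈ ms) (x : α) :
    chosenF ms Y x = some m ↔ x ∈ Y m := by
  classical
  constructor
  · intro hx
    cases hfind : ms.find? (fun m => @decide (x ∈ Y m) (Classical.propDecidable _)) with
    | some m' =>
      have h1 : x ∈ Y m' := by
        have := List.find?_some hfind
        simpa using this
      have heq : chosenF ms Y x = some m' := by simp only [chosenF]; rw [hfind]
      rw [heq] at hx
      injection hx with hx
      exact hx ▸ h1
    | none =>
      simp only [chosenF] at hx
      rw [hfind] at hx
      by_cases hex : ∃ m : Msg, m ∉ ms
      · rw [dif_pos hex] at hx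
        injection hx with hx
        exact absurd (hx ▸ hm) hex.choose_spec
      · rw [dif_neg hex] at hx
        simp at hx
  · intro hx
    cases hfind : ms.find? (fun m => @decide (x ∈ Y m) (Classical.propDecidable _)) with
    | none =>
      exfalso
      have h2 := List.find?_eq_none.1 hfind m hm
      simp at h2
      exact h2 hx
    | some m' =>
      have h1 : x ∈ Y m' := by
        have := List.find?_some hfind
        simpa using this
      have hm'mem : m' ∈ ms := List.mem_of_find?_eq_some hfind
      have heq : m' = m := by
        by_contra hne
        exact hDisj m' hm'mem m hm hne x ⟨h1, hx⟩
      simp only [chosenF]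
      rw [hfind, heq]

lemma chosenF_ne_none {ms : List Msg} {Y : Msg → Set α} {x : α}
    (h : (∃ m : Msg, m ∉ ms) ∨ ∃ m ∈ ms, x ∈ Y m) :
    chosenF ms Y x ≠ none := by
  classical
  cases hfind : ms.find? (fun m => @decide (x ∈ Y m) (Classical.propDecidable _)) with
  | some m' =>
    simp only [chosenF]
    rw [hfind]
    simp
  | none =>
    rcases h with hex | ⟨m, hm, hx⟩
    · simp only [chosenF]
      rw [hfind, dif_pos hex]
      simp
    · exfalso
      have h2 := List.find?_eq_none.1 hfind m hm
      simp at h2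
      exact h2 hx

end Chosen

section MsgFn

variable {P Msg : Type} {M : CMSC P Msg} {W : Set M.E} {ch : M.E → Option Msg}

open Classical in
noncomputable def msgFnF (M : CMSC P Msg) (W : Set M.E)
    (ch : M.E → Option Msg) (x : M.E) : Option Msg :=
  if M.Unmatched x then M.msg x
  else if ∃ y, M.tri x y ∧ x ∈ W ∧ y ∉ W then ch x
  else if h : ∃ y, M.tri y x ∧ y ∈ W ∧ x ∉ W then ch h.choose
  else none

lemma msgFnF_unm {x : M.E} (h : M.Unmatched x) : msgFnF M W ch x = M.msg x := by
  simp only [msgFnF]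
  rw [if_pos h]

lemma msgFnF_crossS {x : M.E} (h1 : ¬ M.Unmatched x)
    (h2 : ∃ y, M.tri x y ∧ x ∈ W ∧ y ∉ W) : msgFnF M W ch x = ch x := by
  simp only [msgFnF]
  rw [if_neg h1, if_pos h2]

lemma msgFnF_crossR {x : M.E} (h1 : ¬ M.Unmatched x)
    (h2 : ¬ ∃ y, M.tri x y ∧ x ∈ W ∧ y ∉ W)
    (h3 : ∃ y, M.tri y x ∧ y ∈ W ∧ x ∉ W) : msgFnF M W ch x = ch h3.choose := by
  simp only [msgFnF]
  rw [if_neg h1, if_neg h2, dif_pos h3]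

lemma msgFnF_none {x : M.E} (h1 : ¬ M.Unmatched x)
    (h2 : ¬ ∃ y, M.tri x y ∧ x ∈ W ∧ y ∉ W)
    (h3 : ¬ ∃ y, M.tri y x ∧ y ∈ W ∧ x ∉ W) : msgFnF M W ch x = none := by
  simp only [msgFnF]
  rw [if_neg h1, if_neg h2, dif_neg h3]

end MsgFn

section RestrictConcat

variable {P Msg : Type}

noncomputable def restrict_concat (M : CMSC P Msg) (W : Set M.E) (mf : M.E → Option Msg)
    (hWne : ∃ e, e ∈ W)
    (hconvW : ∀ a c b, a ∈ W → b ∈ W → M.le a c → M.le c b → c ∈ W)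
    (hmsgW : ∀ e, e ∈ W → (mf e ≠ none ↔
      ((∀ f ∈ W, ¬ M.tri e f) ∧ (∀ f ∈ W, ¬ M.tri f e))))
    (hCne : ∃ e, e ∈ Wᶜ)
    (hconvC : ∀ a c b, a ∈ Wᶜ → b ∈ Wᶜ → M.le a c → M.le c b → c ∈ Wᶜ)
    (hmsgC : ∀ e, e ∈ Wᶜ → (mf e ≠ none ↔
      ((∀ f ∈ Wᶜ, ¬ M.tri e f) ∧ (∀ f ∈ Wᶜ, ¬ M.tri f e))))
    (hdown : ∀ x y, M.le x y → y ∈ W → x ∈ W)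
    (hch : ∀ a b, M.tri a b → a ∈ W → b ∉ W → mf a = mf b ∧ mf a ≠ none)
    (hunm : ∀ e, M.Unmatched e → mf e = M.msg e) :
    IsConcat (M.restrict W mf hWne hconvW hmsgW)
      (M.restrict Wᶜ mf hCne hconvC hmsgC) M where
  eqv := splitEquiv W
  lab_eq e := by
    show M.lab e = Sum.elim (fun a : ↥W => M.lab ↑a) (fun b : ↥(Wᶜ) => M.lab ↑b)
      (splitEquiv W e)
    by_cases he : e ∈ W
    · rw [splitEquiv_apply_mem he]
      rfl
    · rw [splitEquiv_apply_not_mem he]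
      rfl
  le_left a b _ := Iff.rfl
  le_right a b _ := Iff.rfl
  le_cross := fun (a : ↥W) (b : ↥(Wᶜ)) hproc => by
    rcases M.proc_total ↑a ↑b hproc with hle | hle
    · exact hle
    · exact absurd (hdown ↑b ↑a hle a.2) b.2
  tri_left a b := Iff.rfl
  tri_right a b := Iff.rfl
  tri_cross := fun (a : ↥W) (b : ↥(Wᶜ)) htri => hch ↑a ↑b htri a.2 b.2
  tri_back := fun (a : ↥(Wᶜ)) (b : ↥W) htri => a.2 (hdown ↑a ↑b (M.tri_le htri) b.2)
  msg_eq e he := by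
    show M.msg e = Sum.elim (fun a : ↥W => mf ↑a) (fun b : ↥(Wᶜ) => mf ↑b)
      (splitEquiv W e)
    by_cases hw : e ∈ W
    · rw [splitEquiv_apply_mem hw]
      exact (hunm e he).symm
    · rw [splitEquiv_apply_not_mem hw]
      exact (hunm e he).symm

end RestrictConcat

section MainBackward

variable {P Msg : Type} [DecidableEq Msg]

lemma main_backward (φ₁ φ₂ : FO P Msg) (M : CMSC P Msg)
    (hsat : EMSOSat M (mainFO φ₁ φ₂)) :
    ∃ M₁, EMSOSat M₁ φ₁ ∧ ∃ M₂, EMSOSat M₂ φ₂ ∧ ConcatMem M₁ M₂ M := by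
  classical
  obtain ⟨ξ, H⟩ := hsat
  have Hc : ∀ φ ∈ mainList φ₁ φ₂, ∀ ν, FOSat M φ ν ξ :=
    fun φ hφ ν => (fosat_bigAnd _).1 (H ν) φ hφ
  obtain ⟨e₀⟩ := M.nonempty
  -- guard facts
  have hdown : ∀ x y, M.le x y → y ∈ ξ 0 → x ∈ ξ 0 :=
    guardDown_iff.1 (Hc guardDown
      (by simp only [mainList, List.mem_append]; left; left; left; left; simp)
      (fun _ => e₀))
  have hYagree : ∀ m ∈ φ₁.msgs ++ φ₂.msgs, ∀ x y, M.tri x y → x ∈ ξ 0 → y ∉ ξ 0 →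
      (x ∈ ξ (yrF (φ₁.msgs ++ φ₂.msgs) m) ↔ y ∈ ξ (yrF (φ₁.msgs ++ φ₂.msgs) m)) := by
    intro m hm
    refine guardY_iff.1 (Hc _ ?_ (fun _ => e₀))
    simp only [mainList, List.mem_append]
    left; left; left; right
    exact List.mem_map.2 ⟨m, hm, rfl⟩
  have hYsub : ∀ m ∈ φ₁.msgs ++ φ₂.msgs, ∀ x, x ∈ ξ (yrF (φ₁.msgs ++ φ₂.msgs) m) →
      (∃ y, M.tri x y ∧ x ∈ ξ 0 ∧ y ∉ ξ 0) ∨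
      (∃ y, M.tri y x ∧ y ∈ ξ 0 ∧ x ∉ ξ 0) := by
    intro m hm
    refine guardYsub_iff.1 (Hc _ ?_ (fun _ => e₀))
    simp only [mainList, List.mem_append]
    left; left; right
    exact List.mem_map.2 ⟨m, hm, rfl⟩
  have hDisj : ∀ m ∈ φ₁.msgs ++ φ₂.msgs, ∀ m' ∈ φ₁.msgs ++ φ₂.msgs, m ≠ m' →
      ∀ x, ¬(x ∈ ξ (yrF (φ₁.msgs ++ φ₂.msgs) m) ∧
        x ∈ ξ (yrF (φ₁.msgs ++ φ₂.msgs) m')) := by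
    intro m hm m' hm' hne
    refine guardDisj_iff.1 (Hc _ ?_ (fun _ => e₀))
    simp only [mainList, List.mem_append]
    left; right
    refine List.mem_flatMap.2 ⟨m, hm, ?_⟩
    refine List.mem_map.2 ⟨m', List.mem_filter.2 ⟨hm', ?_⟩, rfl⟩
    simpa using hne.symm
  have hExh : (∀ m : Msg, m ∈ φ₁.msgs ++ φ₂.msgs) → ∀ x,
      (∃ y, M.tri x y ∧ x ∈ ξ 0 ∧ y ∉ ξ 0) →
      ∃ m ∈ φ₁.msgs ++ φ₂.msgs, x ∈ ξ (yrF (φ₁.msgs ++ φ₂.msgs) m) := by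
    intro hall x hx
    have hmem : guardExh ((φ₁.msgs ++ φ₂.msgs).map (yrF (φ₁.msgs ++ φ₂.msgs)))
        ∈ mainList φ₁ φ₂ := by
      simp only [mainList, List.mem_append]
      right
      rw [if_pos (show ∀ m : Msg, m ∈ φ₁.msgs ∨ m ∈ φ₂.msgs
        from fun m => List.mem_append.1 (hall m))]
      simp
    obtain ⟨j, hj, hxj⟩ := guardExh_iff.1 (Hc _ hmem (fun _ => e₀)) x hx
    obtain ⟨m, hm, rfl⟩ := List.mem_map.1 hj
    exact ⟨m, hm, hxj⟩
  -- the message function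
  set ch : M.E → Option Msg :=
    chosenF (φ₁.msgs ++ φ₂.msgs) (fun m => ξ (yrF (φ₁.msgs ++ φ₂.msgs) m)) with hch
  set mf : M.E → Option Msg := msgFnF M (ξ 0) ch with hmf
  have hDisj' : ∀ m ∈ φ₁.msgs ++ φ₂.msgs, ∀ m' ∈ φ₁.msgs ++ φ₂.msgs, m ≠ m' →
      ∀ x : M.E, ¬(x ∈ (fun m => ξ (yrF (φ₁.msgs ++ φ₂.msgs) m)) m ∧
        x ∈ (fun m => ξ (yrF (φ₁.msgs ++ φ₂.msgs) m)) m') := hDisj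
  have ch_ne_none : ∀ x : M.E, (∃ y, M.tri x y ∧ x ∈ ξ 0 ∧ y ∉ ξ 0) → ch x ≠ none := by
    intro x hcs
    rw [hch]
    refine chosenF_ne_none ?_
    by_cases hall : ∀ m : Msg, m ∈ φ₁.msgs ++ φ₂.msgs
    · exact Or.inr (hExh hall x hcs)
    · push_neg at hall
      exact Or.inl hall
  -- key spec of mf on the prefix side
  have keyW : ∀ x, x ∈ ξ 0 → ∀ m ∈ φ₁.msgs ++ φ₂.msgs,
      (mf x = some m ↔ (M.msg x = some m ∨ x ∈ ξ (yrF (φ₁.msgs ++ φ₂.msgs) m))) := by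
    intro x hxW m hm
    by_cases hu : M.Unmatched x
    · rw [hmf, msgFnF_unm hu]
      have hnot : x ∉ ξ (yrF (φ₁.msgs ++ φ₂.msgs) m) := by
        intro hx
        rcases hYsub m hm x hx with ⟨y, hy, _, _⟩ | ⟨y, hy, _, _⟩
        · exact hu.1 y hy
        · exact hu.2 y hy
      simp [hnot]
    · have hmn : M.msg x = none := CMSC.msg_of_matched hu
      by_cases hcs : ∃ y, M.tri x y ∧ x ∈ ξ 0 ∧ y ∉ ξ 0
      · rw [hmf, msgFnF_crossS hu hcs, hch, chosenF_eq_some_iff hDisj' hm]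
        simp [hmn]
      · have hcr : ¬ ∃ y, M.tri y x ∧ y ∈ ξ 0 ∧ x ∉ ξ 0 :=
          fun ⟨y, _, _, hx'⟩ => hx' hxW
        rw [hmf, msgFnF_none hu hcs hcr]
        have hnot : x ∉ ξ (yrF (φ₁.msgs ++ φ₂.msgs) m) := by
          intro hx
          rcases hYsub m hm x hx with h | h
          · exact hcs h
          · exact hcr h
        simp [hmn, hnot]
  -- key spec of mf on the suffix side
  have keyC : ∀ x, x ∉ ξ 0 → ∀ m ∈ φ₁.msgs ++ φ₂.msgs,
      (mf x = some m ↔ (M.msg x = some m ∨ x ∈ ξ (yrF (φ₁.msgs ++ φ₂.msgs) m))) := by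
    intro x hxC m hm
    by_cases hu : M.Unmatched x
    · rw [hmf, msgFnF_unm hu]
      have hnot : x ∉ ξ (yrF (φ₁.msgs ++ φ₂.msgs) m) := by
        intro hx
        rcases hYsub m hm x hx with ⟨y, hy, _, _⟩ | ⟨y, hy, _, _⟩
        · exact hu.1 y hy
        · exact hu.2 y hy
      simp [hnot]
    · have hmn : M.msg x = none := CMSC.msg_of_matched hu
      have hcs : ¬ ∃ y, M.tri x y ∧ x ∈ ξ 0 ∧ y ∉ ξ 0 :=
        fun ⟨y, _, hx', _⟩ => hxC hx'
      by_cases hcr : ∃ y, M.tri y x ∧ y ∈ ξ 0 ∧ x ∉ ξ 0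
      · rw [hmf, msgFnF_crossR hu hcs hcr, hch, chosenF_eq_some_iff hDisj' hm]
        obtain ⟨hty, hyW, hxC'⟩ := hcr.choose_spec
        have hag := hYagree m hm hcr.choose x hty hyW hxC'
        simp only [hmn]
        constructor
        · intro h
          exact Or.inr (hag.1 h)
        · rintro (h | h)
          · cases h
          · exact hag.2 h
      · rw [hmf, msgFnF_none hu hcs hcr]
        have hnot : x ∉ ξ (yrF (φ₁.msgs ++ φ₂.msgs) m) := by
          intro hx
          rcases hYsub m hm x hx with h | h
          · exact hcs h
          · exact hcr h
        simp [hmn, hnot]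
  -- restriction hypotheses
  have hWne : ∃ e, e ∈ ξ 0 :=
    guardNonemptyW_iff.1 (Hc guardNonemptyW
      (by simp only [mainList, List.mem_append]; left; left; left; left; simp)
      (fun _ => e₀))
  have hCne : ∃ e, e ∈ (ξ 0)ᶜ :=
    guardNonemptyC_iff.1 (Hc guardNonemptyC
      (by simp only [mainList, List.mem_append]; left; left; left; left; simp)
      (fun _ => e₀))
  have hconvW : ∀ a c b, a ∈ ξ 0 → b ∈ ξ 0 → M.le a c → M.le c b → c ∈ ξ 0 :=
    fun _ c b _ hb _ hcb => hdown c b hcb hb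
  have hconvC : ∀ a c b, a ∈ (ξ 0)ᶜ → b ∈ (ξ 0)ᶜ → M.le a c → M.le c b → c ∈ (ξ 0)ᶜ :=
    fun a c _ ha _ hac _ => fun hc => ha (hdown a c hac hc)
  have hmsgW : ∀ e, e ∈ ξ 0 → (mf e ≠ none ↔
      ((∀ f ∈ ξ 0, ¬ M.tri e f) ∧ (∀ f ∈ ξ 0, ¬ M.tri f e))) := by
    intro e he
    have hcases : ((∀ f ∈ ξ 0, ¬ M.tri e f) ∧ (∀ f ∈ ξ 0, ¬ M.tri f e)) ↔
        (M.Unmatched e ∨ ∃ y, M.tri e y ∧ e ∈ ξ 0 ∧ y ∉ ξ 0) := by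
      constructor
      · intro hR
        by_cases hu : M.Unmatched e
        · exact Or.inl hu
        · have hpart : (∃ f, M.tri e f) ∨ (∃ f, M.tri f e) := by
            by_contra hc
            push_neg at hc
            exact hu ⟨hc.1, hc.2⟩
          rcases hpart with ⟨f, hf⟩ | ⟨f, hf⟩
          · by_cases hfW : f ∈ ξ 0
            · exact absurd hf (hR.1 f hfW)
            · exact Or.inr ⟨f, hf, he, hfW⟩
          · exact absurd hf (hR.2 f (hdown f e (M.tri_le hf) he))
      · rintro (hu | ⟨y, hty, _, hyC⟩)
        · exact ⟨fun f _ hf => hu.1 f hf, fun f _ hf => hu.2 f hf⟩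
        · constructor
          · intro f hfW hf
            exact hyC ((CMSC.tri_func hty hf) ▸ hfW)
          · intro f _ hf
            obtain ⟨p, q, hle', _⟩ := M.tri_lab hty
            obtain ⟨p', q', _, hre⟩ := M.tri_lab hf
            rw [hle'] at hre
            cases hre
    rw [hcases]
    by_cases hcase : M.Unmatched e ∨ ∃ y, M.tri e y ∧ e ∈ ξ 0 ∧ y ∉ ξ 0
    · refine iff_of_true ?_ hcase
      rcases hcase with hu | hcs
      · rw [hmf, msgFnF_unm hu]
        exact (M.msg_dom e).2 hu
      · by_cases hu : M.Unmatched e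
        · rw [hmf, msgFnF_unm hu]
          exact (M.msg_dom e).2 hu
        · rw [hmf, msgFnF_crossS hu hcs]
          exact ch_ne_none e hcs
    · push_neg at hcase
      obtain ⟨hu, hcs⟩ := hcase
      have hcs' : ¬ ∃ y, M.tri e y ∧ e ∈ ξ 0 ∧ y ∉ ξ 0 := by
        intro ⟨y, h1, h2, h3⟩
        exact h3 (hcs y h1 h2)
      have hcr : ¬ ∃ y, M.tri y e ∧ y ∈ ξ 0 ∧ e ∉ ξ 0 :=
        fun ⟨y, _, _, he'⟩ => he' he
      refine iff_of_false ?_ (by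
        intro h
        rcases h with h | h
        · exact hu h
        · exact hcs' h)
      rw [hmf, msgFnF_none hu hcs' hcr]
      simp
  have hmsgC : ∀ e, e ∈ (ξ 0)ᶜ → (mf e ≠ none ↔
      ((∀ f ∈ (ξ 0)ᶜ, ¬ M.tri e f) ∧ (∀ f ∈ (ξ 0)ᶜ, ¬ M.tri f e))) := by
    intro e he
    have he' : e ∉ ξ 0 := he
    have hcases : ((∀ f ∈ (ξ 0)ᶜ, ¬ M.tri e f) ∧ (∀ f ∈ (ξ 0)ᶜ, ¬ M.tri f e)) ↔
        (M.Unmatched e ∨ ∃ y, M.tri y e ∧ y ∈ ξ 0 ∧ e ∉ ξ 0) := by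
      constructor
      · intro hR
        by_cases hu : M.Unmatched e
        · exact Or.inl hu
        · have hpart : (∃ f, M.tri e f) ∨ (∃ f, M.tri f e) := by
            by_contra hc
            push_neg at hc
            exact hu ⟨hc.1, hc.2⟩
          rcases hpart with ⟨f, hf⟩ | ⟨f, hf⟩
          · by_cases hfW : f ∈ ξ 0
            · exact absurd (hdown e f (M.tri_le hf) hfW) he'
            · exact absurd hf (hR.1 f hfW)
          · by_cases hfW : f ∈ ξ 0
            · exact Or.inr ⟨f, hf, hfW, he'⟩
            · exact absurd hf (hR.2 f hfW)
      · rintro (hu | ⟨y, hty, hyW, _⟩)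
        · exact ⟨fun f _ hf => hu.1 f hf, fun f _ hf => hu.2 f hf⟩
        · constructor
          · intro f _ hf
            obtain ⟨p, q, _, hre⟩ := M.tri_lab hty
            obtain ⟨p', q', hse, _⟩ := M.tri_lab hf
            rw [hre] at hse
            cases hse
          · intro f hfC hf
            exact hfC ((CMSC.tri_inj hf hty) ▸ hyW)
    rw [hcases]
    have hcs : ¬ ∃ y, M.tri e y ∧ e ∈ ξ 0 ∧ y ∉ ξ 0 :=
      fun ⟨y, _, he2, _⟩ => he' he2
    by_cases hcase : M.Unmatched e ∨ ∃ y, M.tri y e ∧ y ∈ ξ 0 ∧ e ∉ ξ 0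
    · refine iff_of_true ?_ hcase
      rcases hcase with hu | hcr
      · rw [hmf, msgFnF_unm hu]
        exact (M.msg_dom e).2 hu
      · by_cases hu : M.Unmatched e
        · rw [hmf, msgFnF_unm hu]
          exact (M.msg_dom e).2 hu
        · rw [hmf, msgFnF_crossR hu hcs hcr]
          obtain ⟨hty, hyW, hC⟩ := hcr.choose_spec
          exact ch_ne_none hcr.choose ⟨e, hty, hyW, hC⟩
    · push_neg at hcase
      obtain ⟨hu, hcr⟩ := hcase
      have hcr' : ¬ ∃ y, M.tri y e ∧ y ∈ ξ 0 ∧ e ∉ ξ 0 := by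
        intro ⟨y, h1, h2, h3⟩
        exact h3 (hcr y h1 h2)
      refine iff_of_false ?_ (by
        intro h
        rcases h with h | h
        · exact hu h
        · exact hcr' h)
      rw [hmf, msgFnF_none hu hcs hcr']
      simp
  -- the two restrictions
  refine ⟨M.restrict (ξ 0) mf hWne hconvW hmsgW, ?_,
    M.restrict ((ξ 0)ᶜ) mf hCne hconvC hmsgC, ?_, ?_⟩
  · -- R₁ satisfies φ₁
    refine ⟨fun i => {a : ↥(ξ 0) |
      (a : M.E) ∈ ξ ((φ₁.msgs ++ φ₂.msgs).length + 1 + 2 * i)}, fun ν => ?_⟩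
    have hC := Hc _ (show rel (fun n => FO.mem n 0)
        (fun i => (φ₁.msgs ++ φ₂.msgs).length + 1 + 2 * i)
        (yrF (φ₁.msgs ++ φ₂.msgs)) φ₁ ∈ mainList φ₁ φ₂ by
      simp only [mainList, List.mem_append]; left; left; left; left; simp)
      (Subtype.val ∘ ν)
    refine (rel_correct (N := M.restrict (ξ 0) mf hWne hconvW hmsgW)
      (Subtype.val : ↥(ξ 0) → M.E) (ξ 0) (fun n => FO.mem n 0)
      (fun i => (φ₁.msgs ++ φ₂.msgs).length + 1 + 2 * i) (yrF (φ₁.msgs ++ φ₂.msgs)) ξ _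
      (fun n ν' => Iff.rfl) (fun a => a.2) (fun e he => ⟨⟨e, he⟩, rfl⟩)
      (fun a b hab => Subtype.ext hab)
      (fun a b => Iff.rfl) (fun a b => Iff.rfl) (fun a => rfl)
      (fun a c b _ h2 => hdown c b.1 h2 b.2) (fun i a => Iff.rfl) φ₁ ν ?_).1 hC
    intro m hm a
    exact keyW a.1 a.2 m (List.mem_append_left _ hm)
  · -- R₂ satisfies φ₂
    refine ⟨fun i => {a : ↥((ξ 0)ᶜ) |
      (a : M.E) ∈ ξ ((φ₁.msgs ++ φ₂.msgs).length + 2 + 2 * i)}, fun ν => ?_⟩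
    have hC := Hc _ (show rel (fun n => FO.not (FO.mem n 0))
        (fun i => (φ₁.msgs ++ φ₂.msgs).length + 2 + 2 * i)
        (yrF (φ₁.msgs ++ φ₂.msgs)) φ₂ ∈ mainList φ₁ φ₂ by
      simp only [mainList, List.mem_append]; left; left; left; left; simp)
      (Subtype.val ∘ ν)
    refine (rel_correct (N := M.restrict ((ξ 0)ᶜ) mf hCne hconvC hmsgC)
      (Subtype.val : ↥((ξ 0)ᶜ) → M.E) ((ξ 0)ᶜ) (fun n => FO.not (FO.mem n 0))
      (fun i => (φ₁.msgs ++ φ₂.msgs).length + 2 + 2 * i) (yrF (φ₁.msgs ++ φ₂.msgs)) ξ _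
      (fun n ν' => Iff.rfl) (fun a => a.2) (fun e he => ⟨⟨e, he⟩, rfl⟩)
      (fun a b hab => Subtype.ext hab)
      (fun a b => Iff.rfl) (fun a b => Iff.rfl) (fun a => rfl)
      (fun a c b h1 _ => fun hc => a.2 (hdown a.1 c h1 hc)) (fun i a => Iff.rfl) φ₂ ν ?_).1 hC
    intro m hm a
    exact keyC a.1 a.2 m (List.mem_append_right _ hm)
  · -- M is the concatenation of the two restrictions
    refine ⟨restrict_concat M (ξ 0) mf hWne hconvW hmsgW hCne hconvC hmsgC hdown ?_ ?_⟩
    · intro a b htri haW hbW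
      have hua : ¬ M.Unmatched a := fun hu => hu.1 _ htri
      have hub : ¬ M.Unmatched b := fun hu => hu.2 _ htri
      have hcsa : ∃ y, M.tri a y ∧ a ∈ ξ 0 ∧ y ∉ ξ 0 := ⟨b, htri, haW, hbW⟩
      have hcsb : ¬ ∃ y, M.tri b y ∧ b ∈ ξ 0 ∧ y ∉ ξ 0 := fun ⟨y, _, hb0, _⟩ => hbW hb0
      have hcrb : ∃ y, M.tri y b ∧ y ∈ ξ 0 ∧ b ∉ ξ 0 := ⟨a, htri, haW, hbW⟩
      rw [hmf, msgFnF_crossS hua hcsa, msgFnF_crossR hub hcsb hcrb]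
      have hyeq : hcrb.choose = a := CMSC.tri_inj hcrb.choose_spec.1 htri
      rw [hyeq]
      exact ⟨rfl, ch_ne_none a hcsa⟩
    · intro e hu
      rw [hmf]
      exact msgFnF_unm hu

end MainBackward

section MainForward

variable {P Msg : Type} [DecidableEq Msg]

lemma main_forward (φ₁ φ₂ : FO P Msg) (h1 : φ₁.free = []) (h2 : φ₂.free = [])
    {M₁ M₂ M : CMSC P Msg} (hc : IsConcat M₁ M₂ M)
    (e₁ : EMSOSat M₁ φ₁) (e₂ : EMSOSat M₂ φ₂) : EMSOSat M (mainFO φ₁ φ₂) := by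
  classical
  obtain ⟨ξ₁, H₁⟩ := e₁
  obtain ⟨ξ₂, H₂⟩ := e₂
  obtain ⟨a₁⟩ := M₁.nonempty
  obtain ⟨b₁⟩ := M₂.nonempty
  set ms := φ₁.msgs ++ φ₂.msgs with hms
  set Wimg : Set M.E := Set.range hc.inL with hWimg
  set Y : Msg → Set M.E := fun m => {e | ∃ a b, M.tri (hc.inL a) (hc.inR b) ∧
    M₁.msg a = some m ∧ (e = hc.inL a ∨ e = hc.inR b)} with hY
  set ξM : ℕ → Set M.E := fun j =>
    if j = 0 then Wimg
    else if hj : j - 1 < ms.length then Y (ms.get ⟨j - 1, hj⟩)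
    else if (j - ms.length) % 2 = 1 then hc.inL '' ξ₁ ((j - ms.length - 1) / 2)
    else hc.inR '' ξ₂ ((j - ms.length - 2) / 2) with hξM
  -- decoding the set-variable assignment
  have d0 : ξM 0 = Wimg := by simp [hξM]
  have dY : ∀ m ∈ ms, ξM (yrF ms m) = Y m := by
    intro m hm
    have hlt : List.idxOf m ms < ms.length := List.idxOf_lt_length_iff.2 hm
    have e1 : yrF ms m = 1 + List.idxOf m ms := rfl
    have e2 : 1 + List.idxOf m ms - 1 = List.idxOf m ms := by omega
    simp only [hξM, e1, e2]
    rw [if_neg (by omega), dif_pos hlt, List.idxOf_get]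
  have dA : ∀ i, ξM (ms.length + 1 + 2 * i) = hc.inL '' ξ₁ i := by
    intro i
    simp only [hξM]
    rw [if_neg (by omega), dif_neg (by omega), if_pos (by omega),
      show (ms.length + 1 + 2 * i - ms.length - 1) / 2 = i from by omega]
  have dB : ∀ i, ξM (ms.length + 2 + 2 * i) = hc.inR '' ξ₂ i := by
    intro i
    simp only [hξM]
    rw [if_neg (by omega), dif_neg (by omega), if_neg (by omega),
      show (ms.length + 2 + 2 * i - ms.length - 2) / 2 = i from by omega]
  -- membership in Y
  have Ymem_inL : ∀ (m : Msg) (a : M₁.E), hc.inL a ∈ Y m ↔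
      ((∃ b, M.tri (hc.inL a) (hc.inR b)) ∧ M₁.msg a = some m) := by
    intro m a
    constructor
    · rintro ⟨a', b', htri, hmsg, (heq | heq)⟩
      · obtain rfl := hc.inL_inj heq
        exact ⟨⟨b', htri⟩, hmsg⟩
      · exact absurd heq (hc.inL_ne_inR a b')
    · rintro ⟨⟨b, htri⟩, hmsg⟩
      exact ⟨a, b, htri, hmsg, Or.inl rfl⟩
  have Ymem_inR : ∀ (m : Msg) (b : M₂.E), hc.inR b ∈ Y m ↔
      (∃ a, M.tri (hc.inL a) (hc.inR b) ∧ M₁.msg a = some m) := by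
    intro m b
    constructor
    · rintro ⟨a', b', htri, hmsg, (heq | heq)⟩
      · exact absurd heq.symm (hc.inL_ne_inR a' b)
      · obtain rfl := hc.inR_inj heq
        exact ⟨a', htri, hmsg⟩
    · rintro ⟨a, htri, hmsg⟩
      exact ⟨a, b, htri, hmsg, Or.inr rfl⟩
  -- the message-correspondence fact, left version
  have hmsgL : ∀ (m : Msg), m ∈ ms → ∀ a : M₁.E,
      (M₁.msg a = some m ↔ (M.msg (hc.inL a) = some m ∨ hc.inL a ∈ ξM (yrF ms m))) := by
    intro m hm a
    rw [dY m hm, Ymem_inL]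
    by_cases hcr : ∃ b, M.tri (hc.inL a) (hc.inR b)
    · have hmm : M.msg (hc.inL a) = none :=
        CMSC.msg_of_matched (fun hu => hu.1 _ hcr.choose_spec)
      rw [hmm]
      constructor
      · intro h
        exact Or.inr ⟨hcr, h⟩
      · rintro (h | ⟨_, h⟩)
        · cases h
        · exact h
    · by_cases hu : M₁.Unmatched a
      · have hMu : M.Unmatched (hc.inL a) := by
          constructor
          · intro f hf
            rcases hc.tri_from_inL hf with ⟨b, rfl, htri⟩ | ⟨b, rfl⟩
            · exact hu.1 b htri
            · exact hcr ⟨b, hf⟩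
          · intro f hf
            obtain ⟨b, rfl, htri⟩ := hc.tri_into_inL hf
            exact hu.2 b htri
        have hmsg_eq : M.msg (hc.inL a) = M₁.msg a := by
          have := hc.msg_eq _ hMu
          rwa [IsConcat.inL, Equiv.apply_symm_apply] at this
        rw [hmsg_eq]
        constructor
        · exact fun h => Or.inl h
        · rintro (h | ⟨hb, _⟩)
          · exact h
          · exact absurd hb hcr
      · have hmm1 : M₁.msg a = none := CMSC.msg_of_matched hu
        have hMm : M.msg (hc.inL a) = none := by
          apply CMSC.msg_of_matched
          intro hMu
          apply hu
          constructor
          · intro f hf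
            exact hMu.1 _ ((hc.tri_left a f).2 hf)
          · intro f hf
            exact hMu.2 _ ((hc.tri_left f a).2 hf)
        rw [hmm1, hMm]
        constructor
        · intro h
          cases h
        · rintro (h | ⟨hb, _⟩)
          · cases h
          · exact absurd hb hcr
  -- the message-correspondence fact, right version
  have hmsgR : ∀ (m : Msg), m ∈ ms → ∀ b : M₂.E,
      (M₂.msg b = some m ↔ (M.msg (hc.inR b) = some m ∨ hc.inR b ∈ ξM (yrF ms m))) := by
    intro m hm b
    rw [dY m hm, Ymem_inR]
    by_cases hcr : ∃ a, M.tri (hc.inL a) (hc.inR b)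
    · obtain ⟨a, htri⟩ := hcr
      have hMm : M.msg (hc.inR b) = none :=
        CMSC.msg_of_matched (fun hu => hu.2 _ htri)
      have hmsgs := hc.tri_cross a b htri
      rw [hMm]
      constructor
      · intro h
        exact Or.inr ⟨a, htri, by rw [hmsgs.1, h]⟩
      · rintro (h | ⟨a', htri', hm'⟩)
        · cases h
        · obtain rfl : a' = a := hc.inL_inj (CMSC.tri_inj htri' htri)
          rw [← hmsgs.1]
          exact hm'
    · by_cases hu : M₂.Unmatched b
      · have hMu : M.Unmatched (hc.inR b) := by
          constructor
          · intro f hf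
            obtain ⟨d, rfl, htri⟩ := hc.tri_from_inR hf
            exact hu.1 d htri
          · intro f hf
            rcases hc.tri_into_inR hf with ⟨d, rfl, htri⟩ | ⟨d, rfl⟩
            · exact hu.2 d htri
            · exact hcr ⟨d, hf⟩
        have hmsg_eq : M.msg (hc.inR b) = M₂.msg b := by
          have := hc.msg_eq _ hMu
          rwa [IsConcat.inR, Equiv.apply_symm_apply] at this
        rw [hmsg_eq]
        constructor
        · exact fun h => Or.inl h
        · rintro (h | ⟨a', htri', _⟩)
          · exact h
          · exact absurd ⟨a', htri'⟩ hcr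
      · have hmm2 : M₂.msg b = none := CMSC.msg_of_matched hu
        have hMm : M.msg (hc.inR b) = none := by
          apply CMSC.msg_of_matched
          intro hMu
          apply hu
          constructor
          · intro f hf
            exact hMu.1 _ ((hc.tri_right b f).2 hf)
          · intro f hf
            exact hMu.2 _ ((hc.tri_right f b).2 hf)
        rw [hmm2, hMm]
        constructor
        · intro h
          cases h
        · rintro (h | ⟨a', htri', _⟩)
          · cases h
          · exact absurd ⟨a', htri'⟩ hcr
  refine ⟨ξM, fun ν => ?_⟩
  rw [mainFO, fosat_bigAnd]
  intro φ hφ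
  simp only [mainList, List.mem_append] at hφ
  rcases hφ with (((h | h) | h) | h) | h
  · simp only [List.mem_cons, List.not_mem_nil, or_false] at h
    rcases h with rfl | rfl | rfl | rfl | rfl
    · -- relativized φ₁
      refine (fosat_closed (rel_free_nil (fun n x hx => by simpa [FO.free] using hx) h1)
        (ν' := hc.inL ∘ fun _ => a₁)).2 ?_
      refine (rel_correct (N := M₁) hc.inL Wimg (fun n => FO.mem n 0)
        (fun i => ms.length + 1 + 2 * i) (yrF ms) ξM ξ₁
        (fun n ν' => by simp [FOSat, d0]) (fun a => ⟨a, rfl⟩) (fun e he => he)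
        hc.inL_inj (fun a b => hc.le_inL) (fun a b => hc.tri_left a b)
        hc.lab_inL ?_ ?_ φ₁ (fun _ => a₁) ?_).2 (H₁ (fun _ => a₁))
      · intro a c b _ h2'
        rcases hc.cases c with ⟨d, rfl⟩ | ⟨d, rfl⟩
        · exact ⟨d, rfl⟩
        · exact absurd h2' (hc.not_le_inR_inL d b)
      · intro i a
        rw [dA i]
        exact Function.Injective.mem_set_image hc.inL_inj
      · intro m hm a
        exact hmsgL m (List.mem_append_left _ hm) a
    · -- relativized φ₂
      refine (fosat_closed (rel_free_nil (fun n x hx => by simpa [FO.free] using hx) h2)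
        (ν' := hc.inR ∘ fun _ => b₁)).2 ?_
      refine (rel_correct (N := M₂) hc.inR Wimgᶜ (fun n => FO.not (FO.mem n 0))
        (fun i => ms.length + 2 + 2 * i) (yrF ms) ξM ξ₂
        (fun n ν' => by simp [FOSat, d0])
        (fun b => fun hb => by
          obtain ⟨a, ha⟩ := hb
          exact hc.inL_ne_inR a b ha)
        (fun e he => by
          rcases hc.cases e with ⟨d, rfl⟩ | ⟨d, rfl⟩
          · exact absurd ⟨d, rfl⟩ he
          · exact ⟨d, rfl⟩)
        hc.inR_inj (fun a b => hc.le_inR) (fun a b => hc.tri_right a b)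
        hc.lab_inR ?_ ?_ φ₂ (fun _ => b₁) ?_).2 (H₂ (fun _ => b₁))
      · intro a c b h1' _
        rcases hc.cases c with ⟨d, rfl⟩ | ⟨d, rfl⟩
        · exact absurd h1' (hc.not_le_inR_inL a d)
        · exact fun hd => by
            obtain ⟨a', ha'⟩ := hd
            exact hc.inL_ne_inR a' d ha'
      · intro i a
        rw [dB i]
        exact Function.Injective.mem_set_image hc.inR_inj
      · intro m hm b
        exact hmsgR m (List.mem_append_right _ hm) b
    · -- W nonempty
      rw [guardNonemptyW_iff, d0]
      exact ⟨hc.inL a₁, a₁, rfl⟩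
    · -- complement nonempty
      rw [guardNonemptyC_iff, d0]
      refine ⟨hc.inR b₁, ?_⟩
      rintro ⟨a, ha⟩
      exact hc.inL_ne_inR a b₁ ha
    · -- downward closure
      rw [guardDown_iff]
      intro x y hle hy
      rw [d0] at hy ⊢
      obtain ⟨b, rfl⟩ := hy
      rcases hc.cases x with ⟨d, rfl⟩ | ⟨d, rfl⟩
      · exact ⟨d, rfl⟩
      · exact absurd hle (hc.not_le_inR_inL d b)
  · -- Y-agreement guards
    obtain ⟨m, hm, hEq⟩ := List.mem_map.1 h
    subst hEq
    rw [guardY_iff]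
    intro x y htri hx hy
    rw [d0] at hx hy
    rw [dY m hm]
    obtain ⟨a, rfl⟩ := hx
    rcases hc.cases y with ⟨d, rfl⟩ | ⟨d, rfl⟩
    · exact absurd ⟨d, rfl⟩ hy
    · rw [Ymem_inL, Ymem_inR]
      constructor
      · rintro ⟨_, hmsg⟩
        exact ⟨a, htri, hmsg⟩
      · rintro ⟨a', htri', hmsg⟩
        obtain rfl : a' = a := hc.inL_inj (CMSC.tri_inj htri' htri)
        exact ⟨⟨d, htri⟩, hmsg⟩
  · -- Y ⊆ cross endpoints
    obtain ⟨m, hm, hEq⟩ := List.mem_map.1 h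
    subst hEq
    rw [guardYsub_iff]
    intro x hx
    rw [dY m hm] at hx
    obtain ⟨a, b, htri, hmsg, (rfl | rfl)⟩ := hx
    · refine Or.inl ⟨hc.inR b, htri, ?_, ?_⟩
      · rw [d0]
        exact ⟨a, rfl⟩
      · rw [d0]
        rintro ⟨a', ha'⟩
        exact hc.inL_ne_inR a' b ha'
    · refine Or.inr ⟨hc.inL a, htri, ?_, ?_⟩
      · rw [d0]
        exact ⟨a, rfl⟩
      · rw [d0]
        rintro ⟨a', ha'⟩
        exact hc.inL_ne_inR a' b ha'
  · -- disjointness guards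
    obtain ⟨m, hm, h⟩ := List.mem_flatMap.1 h
    obtain ⟨m', hm', hEq⟩ := List.mem_map.1 h
    obtain ⟨hm'2, hne⟩ := List.mem_filter.1 hm'
    have hne' : m' ≠ m := by simpa using hne
    subst hEq
    rw [guardDisj_iff]
    rintro x ⟨hx1, hx2⟩
    rw [dY m hm] at hx1
    rw [dY m' hm'2] at hx2
    obtain ⟨a, b, htri, hmsg, (rfl | rfl)⟩ := hx1
    · rw [Ymem_inL] at hx2
      rw [hmsg] at hx2
      obtain ⟨_, hx2⟩ := hx2
      exact hne' (Option.some.inj hx2).symm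
    · rw [Ymem_inR] at hx2
      obtain ⟨a', htri', hmsg'⟩ := hx2
      obtain rfl : a' = a := hc.inL_inj (CMSC.tri_inj htri' htri)
      rw [hmsg] at hmsg'
      exact hne' (Option.some.inj hmsg').symm
  · -- exhaustiveness guard
    by_cases hall : ∀ m : Msg, m ∈ φ₁.msgs ∨ m ∈ φ₂.msgs
    · rw [if_pos hall] at h
      simp only [List.mem_singleton] at h
      subst h
      rw [guardExh_iff]
      intro x hx
      obtain ⟨y, htri, hxW, hyW⟩ := hx
      rw [d0] at hxW hyW
      obtain ⟨a, rfl⟩ := hxW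
      rcases hc.cases y with ⟨d, rfl⟩ | ⟨d, rfl⟩
      · exact absurd ⟨d, rfl⟩ hyW
      · have hcross := hc.tri_cross a d htri
        obtain ⟨m', hm'⟩ := Option.ne_none_iff_exists'.1 hcross.2
        have hm'ms : m' ∈ ms := List.mem_append.2 (hall m')
        refine ⟨yrF ms m', List.mem_map.2 ⟨m', hm'ms, rfl⟩, ?_⟩
        rw [dY m' hm'ms, Ymem_inL]
        exact ⟨⟨d, htri⟩, hm'⟩
    · rw [if_neg hall] at h
      exact absurd h List.not_mem_nil

end MainForward

/-- EMSO-definable languages of cMSCs are closed under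
concatenation: if `L₁` (a language of finite cMSCs) and `L₂` are
EMSO-definable, then so is `L₁ ∘ L₂` (by a sentence whose set quantifiers
comprise the prefix-guessing variable `W`, the message-guessing variables
`Y_m`, and the original variables `X₁,…,X_k`). -/
theorem emso_concat {P Msg : Type} (L₁ L₂ : Set (CMSC P Msg))
    (hfin : ∀ M ∈ L₁, Finite M.E)
    (h₁ : EMSODefinable L₁) (h₂ : EMSODefinable L₂) :
    EMSODefinable (ConcatLang L₁ L₂) := by
  classical
  obtain ⟨φ₁, h1free, h1iff⟩ := h₁
  obtain ⟨φ₂, h2free, h2iff⟩ := h₂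
  refine ⟨mainFO φ₁ φ₂, mainFO_free h1free h2free, fun M => ?_⟩
  constructor
  · rintro ⟨M₁, hM₁, M₂, hM₂, ⟨hcon⟩⟩
    exact main_forward φ₁ φ₂ h1free h2free hcon ((h1iff M₁).1 hM₁) ((h2iff M₂).1 hM₂)
  · intro hsat
    obtain ⟨M₁, hs1, M₂, hs2, hcm⟩ := main_backward φ₁ φ₂ M hsat
    exact ⟨M₁, (h1iff M₁).2 hs1, M₂, (h2iff M₂).2 hs2, hcm⟩

end HMSCPaper
end
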